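/- arXiv:1508.04854 — 2 statements merged into one kernel-verified Lean document; each statement's English description precedes it below -/
import Mathlib

section
/- Under the translation [[·]] from L_{S,M,C,NO,J} into L_{A,M,C,NO,J} defined by [[ n̄⟨a⟩.P ]] = (νz)( n̄⟨z⟩ | (z(x))▷( x̄⟨a⟩ | [[P]] ) ) and [[ (n₁(a₁)|…|nᵢ(aᵢ))▷Q ]] = (νx₁,…,xᵢ)( (n₁(z₁)|…|nᵢ(zᵢ))▷( z̄₁⟨x₁⟩ | … | z̄ᵢ⟨xᵢ⟩ | (x₁(a₁)|…|xᵢ(aᵢ))▷[[Q]] ) ) (identity on all other process forms), for any L_{S,M,C,NO,J} input P and output Q: [[P]] | [[Q]] has a reduction if and only if P | Q has a reduction. -/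
/-!
A formalization of the framework of Given-Wilson's
"On the Expressiveness of Joining and Splitting":
the 48 process calculi parameterized by synchronism, arity,
communication medium, pattern-matching and coordination,
with structural congruence, reduction, valid encodings and
coordination degree.
-/

namespace Coordination

/-- Names. -/
abbrev Name := ℕ

/-- Terms: names and compounds `s • t`. -/
inductive Term : Type
  | name : Name → Term
  | comp : Term → Term → Term
  deriving DecidableEq

/-- Intensional patterns: binding names `x`, name-matches `⌜a⌝`, compounds `p • q`. -/
inductive Pat : Type
  | bind : Name → Pat
  | nmatch : Name → Pat
  | comp : Pat → Pat → Pat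
  deriving DecidableEq

/-- Processes.  The syntax is generic enough to cover all 48 languages:
outputs have an optional channel, a tuple of terms, and a continuation
(which is `nil` for asynchronous languages); inputs are joins, i.e. lists of
(optional channel, tuple of patterns) pairs (singletons for binary languages). -/
inductive Proc : Type
  | nil : Proc
  | out : Option Term → List Term → Proc → Proc
  | inp : List (Option Term × List Pat) → Proc → Proc
  | res : Name → Proc → Proc
  | par : Proc → Proc → Proc
  | ite : Term → Term → Proc → Proc → Proc
  | repl : Proc → Proc
  | succ : Proc

/-- Names of a term. -/
def Term.names : Term → Finset Name
  | .name a => {a}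
  | .comp s t => s.names ∪ t.names

/-- Binding names of a pattern (in order). -/
def Pat.binds : Pat → List Name
  | .bind x => [x]
  | .nmatch _ => []
  | .comp p q => p.binds ++ q.binds

/-- Free (name-match) names of a pattern. -/
def Pat.frees : Pat → Finset Name
  | .bind _ => ∅
  | .nmatch a => {a}
  | .comp p q => p.frees ∪ q.frees

def optNames : Option Term → Finset Name
  | none => ∅
  | some t => t.names

/-- Binding names of a join. -/
def joinBinds (J : List (Option Term × List Pat)) : List Name :=
  J.foldr (fun j acc => (j.2.foldr (fun p b => p.binds ++ b) []) ++ acc) []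

/-- Free names of a join (channels and name-matches). -/
def joinFrees (J : List (Option Term × List Pat)) : Finset Name :=
  J.foldr (fun j acc => optNames j.1 ∪ (j.2.foldr (fun p b => p.frees ∪ b) ∅) ∪ acc) ∅

/-- Free names of a process. -/
def Proc.fnames : Proc → Finset Name
  | .nil => ∅
  | .out ch ts P => optNames ch ∪ ts.foldr (fun t a => t.names ∪ a) ∅ ∪ P.fnames
  | .inp J P => joinFrees J ∪ (P.fnames \ (joinBinds J).toFinset)
  | .res a P => P.fnames.erase a
  | .par P Q => P.fnames ∪ Q.fnames
  | .ite s t P Q => s.names ∪ t.names ∪ P.fnames ∪ Q.fnames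
  | .repl P => P.fnames
  | .succ => ∅

/-- All names of a process (free, bound and binding). -/
def Proc.anames : Proc → Finset Name
  | .nil => ∅
  | .out ch ts P => optNames ch ∪ ts.foldr (fun t a => t.names ∪ a) ∅ ∪ P.anames
  | .inp J P => joinFrees J ∪ (joinBinds J).toFinset ∪ P.anames
  | .res a P => insert a P.anames
  | .par P Q => P.anames ∪ Q.anames
  | .ite s t P Q => s.names ∪ t.names ∪ P.anames ∪ Q.anames
  | .repl P => P.anames
  | .succ => ∅

/-- Substitutions: mappings from names to terms (identity outside the domain). -/
abbrev Sub := Name → Term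

def Term.subst (σ : Sub) : Term → Term
  | .name a => σ a
  | .comp s t => .comp (s.subst σ) (t.subst σ)

/-- The name-match pattern `⌜t⌝` of a term, with `⌜s•t⌝ = ⌜s⌝•⌜t⌝`. -/
def Term.toMatchPat : Term → Pat
  | .name a => .nmatch a
  | .comp s t => .comp s.toMatchPat t.toMatchPat

def Pat.subst (σ : Sub) : Pat → Pat
  | .bind x => .bind x
  | .nmatch a => (σ a).toMatchPat
  | .comp p q => .comp (p.subst σ) (q.subst σ)

/-- Remove a list of (bound) names from the domain of a substitution. -/
def shadow (σ : Sub) (bs : List Name) : Sub :=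
  fun x => if x ∈ bs then Term.name x else σ x

/-- Application of a substitution to a process (binders shadow the domain). -/
def Proc.subst (σ : Sub) : Proc → Proc
  | .nil => .nil
  | .out ch ts P => .out (ch.map (Term.subst σ)) (ts.map (Term.subst σ)) (P.subst σ)
  | .inp J P =>
      .inp (J.map fun j => (j.1.map (Term.subst σ), j.2.map (Pat.subst σ)))
        (P.subst (shadow σ (joinBinds J)))
  | .res a P => .res a (P.subst (shadow σ [a]))
  | .par P Q => .par (P.subst σ) (Q.subst σ)
  | .ite s t P Q => .ite (s.subst σ) (t.subst σ) (P.subst σ) (Q.subst σ)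
  | .repl P => .repl (P.subst σ)
  | .succ => .succ

/-- The match rule `{t // p}`, producing an association list (the substitution). -/
def matchPat : Term → Pat → Option (List (Name × Term))
  | t, .bind x => some [(x, t)]
  | .name a, .nmatch b => if a = b then some [] else none
  | .comp s t, .comp p q => do
      let l₁ ← matchPat s p
      let l₂ ← matchPat t q
      pure (l₁ ++ l₂)
  | _, _ => none

/-- The poly-match rule `Match(t̃ ; p̃)`. -/
def polyMatch : List Term → List Pat → Option (List (Name × Term))
  | [], [] => some []
  | t :: ts, p :: ps => do
      let l₁ ← matchPat t p
      let l₂ ← polyMatch ts ps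
      pure (l₁ ++ l₂)
  | _, _ => none

/-- Matching of a list of outputs (channel and data) against a join:
channels must agree pairwise and the data must poly-match the patterns. -/
def joinMatch : List (Option Term × List Term) → List (Option Term × List Pat) →
    Option (List (Name × Term))
  | [], [] => some []
  | (c, ts) :: os, (c', ps) :: js =>
      if c = c' then do
        let l₁ ← polyMatch ts ps
        let l₂ ← joinMatch os js
        pure (l₁ ++ l₂)
      else none
  | _, _ => none

/-- Turn an association list into a substitution. -/
def toSub (l : List (Name × Term)) : Sub :=
  fun x => (l.lookup x).getD (Term.name x)

/-- Parallel composition of a list of processes. -/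
def parList (l : List Proc) : Proc := l.foldr Proc.par Proc.nil

/-- Renaming of one binding name in a pattern. -/
def renameBindPat (x b : Name) : Pat → Pat
  | .bind y => if y = x then .bind b else .bind y
  | .nmatch a => .nmatch a
  | .comp p q => .comp (renameBindPat x b p) (renameBindPat x b q)

def renameBindJoin (x b : Name) (J : List (Option Term × List Pat)) :
    List (Option Term × List Pat) :=
  J.map fun j => (j.1, j.2.map (renameBindPat x b))

/-- The substitution replacing the name `a` by the name `b`. -/
def ren1 (a b : Name) : Sub :=
  fun x => if x = a then Term.name b else Term.name x

/-- Structural congruence. -/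
inductive Congr : Proc → Proc → Prop
  | refl (P : Proc) : Congr P P
  | symm : Congr P Q → Congr Q P
  | trans : Congr P Q → Congr Q R → Congr P R
  | par_nil (P : Proc) : Congr (.par P .nil) P
  | par_comm (P Q : Proc) : Congr (.par P Q) (.par Q P)
  | par_assoc (P Q R : Proc) : Congr (.par P (.par Q R)) (.par (.par P Q) R)
  | ite_eq (s : Term) (P Q : Proc) : Congr (.ite s s P Q) P
  | ite_ne (h : s ≠ t) (P Q : Proc) : Congr (.ite s t P Q) Q
  | res_nil (a : Name) : Congr (.res a .nil) .nil
  | res_swap (a b : Name) (P : Proc) : Congr (.res a (.res b P)) (.res b (.res a P))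
  | res_par (h : a ∉ Proc.fnames P) : Congr (.par P (.res a Q)) (.res a (.par P Q))
  | repl_unfold (P : Proc) : Congr (.repl P) (.par P (.repl P))
  | alpha_res (h : b ∉ Proc.anames P) :
      Congr (.res a P) (.res b (P.subst (ren1 a b)))
  | alpha_inp (hx : x ∈ joinBinds J) (hb : b ∉ Proc.anames (.inp J P)) :
      Congr (.inp J P) (.inp (renameBindJoin x b J) (P.subst (ren1 x b)))
  | ctx_out : Congr P P' → Congr (.out ch ts P) (.out ch ts P')
  | ctx_inp : Congr P P' → Congr (.inp J P) (.inp J P')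
  | ctx_res : Congr P P' → Congr (.res a P) (.res a P')
  | ctx_par : Congr P P' → Congr Q Q' → Congr (.par P Q) (.par P' Q')
  | ctx_ite : Congr P P' → Congr Q Q' → Congr (.ite s t P Q) (.ite s t P' Q')
  | ctx_repl : Congr P P' → Congr (.repl P) (.repl P')

/-- Reduction: the (joining) interaction axiom closed under parallel
composition, restriction and structural congruence.  The binary interaction
axiom is the special case of a singleton join. -/
inductive Red : Proc → Proc → Prop
  | interact (outs : List (Option Term × List Term × Proc))
      (J : List (Option Term × List Pat)) (Q : Proc) (l : List (Name × Term))
      (hne : outs ≠ [])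
      (hm : joinMatch (outs.map fun o => (o.1, o.2.1)) J = some l) :
      Red (.par (parList (outs.map fun o => Proc.out o.1 o.2.1 o.2.2)) (.inp J Q))
          (.par (parList (outs.map fun o => o.2.2)) (Q.subst (toSub l)))
  | ctx_par : Red P P' → Red (.par P Q) (.par P' Q)
  | ctx_res : Red P P' → Red (.res a P) (.res a P')
  | struct : Congr P Q → Red Q Q' → Congr Q' P' → Red P P'

/-- Reflexive-transitive closure of reduction. -/
abbrev Reds := Relation.ReflTransGen Red

/-- `P` has a reduction. -/
def Reduces (P : Proc) : Prop := ∃ Q, Red P Q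

/-- `P ⇓`: `P` may reduce to a process with `✓` at top level. -/
def MaySucceed (P : Proc) : Prop :=
  ∃ Q R, Reds P Q ∧ Congr Q (.par R .succ)

/-- `P` diverges: it has an infinite reduction sequence. -/
def Diverges (P : Proc) : Prop :=
  ∃ f : ℕ → Proc, f 0 = P ∧ ∀ n, Red (f n) (f (n + 1))

/-! ### The 48 languages -/

inductive Sync | A | S
  deriving DecidableEq
inductive Arity | M | P
  deriving DecidableEq
inductive Medium | D | C
  deriving DecidableEq
inductive PM | NO | NM | I
  deriving DecidableEq
inductive Coord | B | J
  deriving DecidableEq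

/-- The five features determining a language `L_{α,β,γ,δ,ε}`. -/
structure Features where
  sync : Sync
  arity : Arity
  medium : Medium
  pm : PM
  coord : Coord

def Term.isName : Term → Prop
  | .name _ => True
  | _ => False

/-- Patterns allowed by a pattern-matching discipline. -/
def WFpat : PM → Pat → Prop
  | .NO, .bind _ => True
  | .NO, _ => False
  | .NM, .bind _ => True
  | .NM, .nmatch _ => True
  | .NM, _ => False
  | .I, _ => True

/-- Channels allowed by a language: none for dataspace-based languages,
a term (a name unless intensional) for channel-based languages. -/
def WFchan (F : Features) : Option Term → Prop
  | none => F.medium = .D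
  | some t => F.medium = .C ∧ (F.pm = .I ∨ t.isName)

/-- Output data: arbitrary terms only in intensional languages. -/
def WFdataTerm (F : Features) (t : Term) : Prop := F.pm = .I ∨ t.isName

/-- Tuple arity: one for monadic languages. -/
def WFarity (F : Features) (n : ℕ) : Prop :=
  match F.arity with
  | .M => n = 1
  | .P => True

/-- Number of input patterns in a join: one for binary languages. -/
def WFjoinLen (F : Features) (n : ℕ) : Prop :=
  match F.coord with
  | .B => n = 1
  | .J => 1 ≤ n

/-- Well-formed processes of the language `L_F`. -/
def Proc.WF (F : Features) : Proc → Prop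
  | .nil => True
  | .out ch ts P => WFchan F ch ∧ WFarity F ts.length ∧ (∀ t ∈ ts, WFdataTerm F t) ∧
      (F.sync = .A → P = .nil) ∧ P.WF F
  | .inp J P => WFjoinLen F J.length ∧
      (∀ j ∈ J, WFchan F j.1 ∧ WFarity F j.2.length ∧ ∀ p ∈ j.2, WFpat F.pm p) ∧
      (joinBinds J).Nodup ∧ P.WF F
  | .res _ P => P.WF F
  | .par P Q => P.WF F ∧ Q.WF F
  | .ite s t P Q => WFdataTerm F s ∧ WFdataTerm F t ∧ P.WF F ∧ Q.WF F
  | .repl P => P.WF F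
  | .succ => True

/-! ### Contexts and valid encodings -/

/-- `k`-ary (linear, multi-hole) contexts. -/
inductive Ctx : ℕ → Type
  | hole : Ctx 1
  | const : Proc → Ctx 0
  | out : Option Term → List Term → Ctx k → Ctx k
  | inp : List (Option Term × List Pat) → Ctx k → Ctx k
  | res : Name → Ctx k → Ctx k
  | par : Ctx k → Ctx m → Ctx (k + m)
  | ite : Term → Term → Ctx k → Ctx m → Ctx (k + m)
  | repl : Ctx k → Ctx k

/-- Filling the holes of a context with processes, in order. -/
def Ctx.fill : {k : ℕ} → Ctx k → (Fin k → Proc) → Proc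
  | _, .hole, f => f 0
  | _, .const P, _ => P
  | _, .out ch ts C, f => .out ch ts (C.fill f)
  | _, .inp J C, f => .inp J (C.fill f)
  | _, .res a C, f => .res a (C.fill f)
  | _, .par C D, f =>
      .par (C.fill (fun i => f (Fin.castAdd _ i))) (D.fill (fun i => f (Fin.natAdd _ i)))
  | _, .ite s t C D, f =>
      .ite s t (C.fill (fun i => f (Fin.castAdd _ i))) (D.fill (fun i => f (Fin.natAdd _ i)))
  | _, .repl C, f => .repl (C.fill f)

/-- Application of a name-substitution to a process. -/
def nsub (σ : Name → Name) (P : Proc) : Proc :=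
  P.subst (fun x => Term.name (σ x))

/-- A valid encoding of `L_{F₁}` into `L_{F₂}`: a translation `enc` together
with a renaming policy `φ`, satisfying compositionality, name invariance,
operational correspondence (up to a reduction-sensitive reference behavioural
equivalence `beq` of the target), divergence reflection and
success sensitiveness. -/
structure ValidEncoding (F₁ F₂ : Features) where
  enc : Proc → Proc
  k : ℕ
  k_pos : 0 < k
  φ : Name → List Name
  φ_len : ∀ a, (φ a).length = k
  enc_wf : ∀ S, S.WF F₁ → (enc S).WF F₂
  /-- the reference behavioural equivalence of the target language -/
  beq : Proc → Proc → Prop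
  beq_equiv : Equivalence beq
  /-- `beq` is reduction sensitive -/
  beq_reduction_sensitive : ∀ {P Q}, beq P Q → Reduces P → Reduces Q
  /-- `beq` is success sensitive -/
  beq_success_sensitive : ∀ {P Q}, beq P Q → (MaySucceed P ↔ MaySucceed Q)
  /-- compositionality, for each operator of the source language -/
  comp_nil : ∃ C : Ctx 0, enc .nil = C.fill ![]
  comp_succ : ∃ C : Ctx 0, enc .succ = C.fill ![]
  comp_out : ∀ (ch : Option Term) (ts : List Term) (N : Finset Name), ∃ C : Ctx 1,
      ∀ S, S.WF F₁ → S.fnames = N → enc (.out ch ts S) = C.fill ![enc S]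
  comp_inp : ∀ (J : List (Option Term × List Pat)) (N : Finset Name), ∃ C : Ctx 1,
      ∀ S, S.WF F₁ → S.fnames = N → enc (.inp J S) = C.fill ![enc S]
  comp_res : ∀ (a : Name) (N : Finset Name), ∃ C : Ctx 1,
      ∀ S, S.WF F₁ → S.fnames = N → enc (.res a S) = C.fill ![enc S]
  comp_repl : ∀ (N : Finset Name), ∃ C : Ctx 1,
      ∀ S, S.WF F₁ → S.fnames = N → enc (.repl S) = C.fill ![enc S]
  comp_par : ∀ (N : Finset Name), ∃ C : Ctx 2,
      ∀ S₁ S₂, S₁.WF F₁ → S₂.WF F₁ → S₁.fnames ∪ S₂.fnames = N →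
        enc (.par S₁ S₂) = C.fill ![enc S₁, enc S₂]
  comp_ite : ∀ (s t : Term) (N : Finset Name), ∃ C : Ctx 2,
      ∀ S₁ S₂, S₁.WF F₁ → S₂.WF F₁ → S₁.fnames ∪ S₂.fnames = N →
        enc (.ite s t S₁ S₂) = C.fill ![enc S₁, enc S₂]
  /-- name invariance -/
  name_invariance : ∀ σ : Name → Name, ∃ σ' : Name → Name,
      (∀ a, φ (σ a) = (φ a).map σ') ∧
      ∀ S, S.WF F₁ →
        (Function.Injective σ → enc (nsub σ S) = nsub σ' (enc S)) ∧
        (¬ Function.Injective σ → beq (enc (nsub σ S)) (nsub σ' (enc S)))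
  /-- operational correspondence: completeness -/
  op_complete : ∀ S S', S.WF F₁ → Reds S S' →
      ∃ T, Reds (enc S) T ∧ beq T (enc S')
  /-- operational correspondence: soundness -/
  op_sound : ∀ S T, S.WF F₁ → Reds (enc S) T →
      ∃ S' T', Reds S S' ∧ Reds T T' ∧ beq T' (enc S')
  /-- divergence reflection -/
  divergence_reflection : ∀ S, S.WF F₁ → Diverges (enc S) → Diverges S
  /-- success sensitiveness -/
  success_sensitive : ∀ S, S.WF F₁ → (MaySucceed S ↔ MaySucceed (enc S))

/-! ### Coordination degree -/

/-- `n` processes of `L_F` must coordinate to yield a reduction: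
there are `n` well-formed processes whose parallel composition reduces,
but replacing any one of them by `0` removes all reductions. -/
def MustCoordinate (F : Features) (n : ℕ) : Prop :=
  ∃ S : Fin n → Proc, (∀ i, (S i).WF F) ∧
    Reduces (parList (List.ofFn S)) ∧
    ∀ j : Fin n, ¬ Reduces (parList (List.ofFn (Function.update S j Proc.nil)))

/-- The coordination degree of `L_F`: the least upper bound of the numbers of
processes that must coordinate to yield a reduction. -/
noncomputable def coordDeg (F : Features) : ℕ∞ :=
  sSup {x : ℕ∞ | ∃ n : ℕ, x = (n : ℕ∞) ∧ MustCoordinate F n}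

end Coordination

namespace Coordination

/-- The language `L_{S,M,C,NO,J}`. -/
def LSMCNOJ : Features := ⟨.S, .M, .C, .NO, .J⟩
/-- The language `L_{A,M,C,NO,J}`. -/
def LAMCNOJ : Features := ⟨.A, .M, .C, .NO, .J⟩

/-- The translation `[[·]]` from `L_{S,M,C,NO,J}` into `L_{A,M,C,NO,J}`:
`[[ n̄⟨a⟩.P ]] = (νz)( n̄⟨z⟩ | (z(x))▷( x̄⟨a⟩ | [[P]] ) )` and
`[[ (n₁(a₁)|…|nᵢ(aᵢ))▷Q ]] = (νx₁,…,xᵢ)( (n₁(z₁)|…|nᵢ(zᵢ))▷( z̄₁⟨x₁⟩ | … | z̄ᵢ⟨xᵢ⟩ |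
  (x₁(a₁)|…|xᵢ(aᵢ))▷[[Q]] ) )`,
and the identity on all other process forms; the names `z, x` (resp.
`z₁,…,zᵢ,x₁,…,xᵢ`) are chosen fresh. -/
def trans : Proc → Proc
  | .nil => .nil
  | .out ch ts P =>
      let z := (Proc.out ch ts P).anames.sup id + 1
      let x := z + 1
      .res z (.par (.out ch [Term.name z] .nil)
        (.inp [(some (Term.name z), [Pat.bind x])]
          (.par (.out (some (Term.name x)) ts .nil) (trans P))))
  | .inp J P =>
      let base := (Proc.inp J P).anames.sup id + 1
      let i := J.length
      -- `z_j := base + j` and `x_j := base + i + j`, for `j < i`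
      (List.range i).foldr (fun j R => .res (base + i + j) R)
        (.inp (((List.range i).zip J).map fun jc => (jc.2.1, [Pat.bind (base + jc.1)]))
          (.par
            (parList ((List.range i).map fun j =>
              .out (some (Term.name (base + j))) [Term.name (base + i + j)] .nil))
            (.inp (((List.range i).zip J).map fun jc =>
                (some (Term.name (base + i + jc.1)), jc.2.2))
              (trans P))))
  | .res a P => .res a (trans P)
  | .par P Q => .par (trans P) (trans Q)
  | .ite s t P Q => .ite s t (trans P) (trans Q)
  | .repl P => .repl (trans P)
  | .succ => .succ

/-- `P` is an input (a join). -/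
def Proc.IsInput (P : Proc) : Prop := ∃ J Q, P = .inp J Q

/-- `P` is an output. -/
def Proc.IsOutput (P : Proc) : Prop := ∃ ch ts Q, P = .out ch ts Q

end Coordination

namespace Coordination


/-! ### Auxiliary machinery for Statement 2 -/

section Aux

/-! #### Term-level renaming lemmas -/

lemma Term.subst_id (t : Term) : t.subst (fun x => Term.name x) = t := by
  induction t with
  | name a => rfl
  | comp s t ihs iht => simp [Term.subst, ihs, iht]

lemma listMapSelf {α : Type*} {l : List α} {f : α → α} (h : ∀ x ∈ l, f x = x) :
    l.map f = l := by
  induction l with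
  | nil => rfl
  | cons x l ih => simp [h x (by simp), ih (fun y hy => h y (by simp [hy]))]

lemma Term.subst_ren1_of_not_mem {a b : Name} {t : Term} (h : a ∉ t.names) :
    t.subst (ren1 a b) = t := by
  induction t with
  | name c =>
      simp [Term.names] at h
      have : c ≠ a := fun he => h he.symm
      simp [Term.subst, ren1, this]
  | comp s t ihs iht =>
      simp [Term.names] at h
      simp [Term.subst, ihs h.1, iht h.2]

lemma Term.mem_names_subst_ren1_self {a b : Name} {t : Term} (h : a ∈ t.names) :
    b ∈ (t.subst (ren1 a b)).names := by
  induction t with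
  | name c =>
      simp [Term.names] at h
      simp [Term.subst, ren1, h, Term.names]
  | comp s t ihs iht =>
      simp [Term.names, Term.subst] at h ⊢
      rcases h with h | h
      · exact Or.inl (ihs h)
      · exact Or.inr (iht h)

lemma Term.mem_names_subst_ren1 {a b c : Name} (h1 : c ≠ a) (h2 : c ≠ b) (t : Term) :
    c ∈ (t.subst (ren1 a b)).names ↔ c ∈ t.names := by
  induction t with
  | name d =>
      by_cases hd : d = a <;> simp [Term.subst, ren1, hd, Term.names, h1, h2]
  | comp s t ihs iht => simp [Term.subst, Term.names, ihs, iht]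

lemma Term.names_subst_ren1_subset {a b : Name} (t : Term) :
    (t.subst (ren1 a b)).names ⊆ insert b t.names := by
  induction t with
  | name d =>
      by_cases hd : d = a <;> simp [Term.subst, ren1, hd, Term.names] <;> intro x hx <;>
        simp_all
  | comp s t ihs iht =>
      simp only [Term.subst, Term.names]
      intro x hx
      simp only [Finset.mem_union] at hx
      rcases hx with hx | hx
      · have := ihs hx; simp only [Finset.mem_insert, Finset.mem_union] at this ⊢; tauto
      · have := iht hx; simp only [Finset.mem_insert, Finset.mem_union] at this ⊢; tauto

lemma Term.subst_ren1_inv {a b : Name} {t : Term} (h : b ∉ t.names) :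
    (t.subst (ren1 a b)).subst (ren1 b a) = t := by
  induction t with
  | name c =>
      simp [Term.names] at h
      have hcb : c ≠ b := fun he => h he.symm
      by_cases hc : c = a
      · simp [Term.subst, ren1, hc]
      · simp [Term.subst, ren1, hc, hcb]
  | comp s t ihs iht =>
      simp [Term.names] at h
      simp [Term.subst, ihs h.1, iht h.2]

lemma Term.subst_ren1_inj {a b : Name} {s t : Term} (hs : b ∉ s.names) (ht : b ∉ t.names) :
    s.subst (ren1 a b) = t.subst (ren1 a b) ↔ s = t := by
  constructor
  · intro h
    have := congrArg (Term.subst (ren1 b a)) h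
    rwa [Term.subst_ren1_inv hs, Term.subst_ren1_inv ht] at this
  · rintro rfl; rfl

lemma Term.toMatchPat_binds (t : Term) : t.toMatchPat.binds = [] := by
  induction t with
  | name a => rfl
  | comp s t ihs iht => simp [Term.toMatchPat, Pat.binds, ihs, iht]

lemma Term.toMatchPat_frees (t : Term) : t.toMatchPat.frees = t.names := by
  induction t with
  | name a => rfl
  | comp s t ihs iht => simp [Term.toMatchPat, Pat.frees, Term.names, ihs, iht]

lemma Pat.subst_binds (σ : Sub) (p : Pat) : (p.subst σ).binds = p.binds := by
  induction p with
  | bind x => rfl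
  | nmatch a => simp [Pat.subst, Term.toMatchPat_binds, Pat.binds]
  | comp p q ihp ihq => simp [Pat.subst, Pat.binds, ihp, ihq]

lemma Pat.subst_id (p : Pat) : p.subst (fun x => Term.name x) = p := by
  induction p with
  | bind x => rfl
  | nmatch a => rfl
  | comp p q ihp ihq => simp [Pat.subst, ihp, ihq]

lemma Pat.frees_subst_ren1_subset {a b : Name} (p : Pat) :
    (p.subst (ren1 a b)).frees ⊆ insert b p.frees := by
  induction p with
  | bind x => simp [Pat.subst, Pat.frees]
  | nmatch c =>
      by_cases hc : c = a <;>
        simp [Pat.subst, ren1, hc, Term.toMatchPat, Pat.frees, Term.toMatchPat_frees,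
          Term.names, Finset.subset_iff]
  | comp p q ihp ihq =>
      simp only [Pat.subst, Pat.frees]
      intro x hx
      simp only [Finset.mem_union] at hx
      rcases hx with hx | hx
      · have := ihp hx; simp only [Finset.mem_insert, Finset.mem_union] at this ⊢; tauto
      · have := ihq hx; simp only [Finset.mem_insert, Finset.mem_union] at this ⊢; tauto

/-! #### shadow lemmas -/

lemma shadow_id (bs : List Name) :
    shadow (fun x => Term.name x) bs = (fun x => Term.name x) := by
  funext x; simp [shadow]

lemma shadow_ren1_mem {a b : Name} {bs : List Name} (h : a ∈ bs) :
    shadow (ren1 a b) bs = (fun x => Term.name x) := by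
  funext x
  by_cases hx : x ∈ bs
  · simp [shadow, hx]
  · have : x ≠ a := fun he => hx (he ▸ h)
    simp [shadow, hx, ren1, this]

lemma shadow_ren1_not_mem {a b : Name} {bs : List Name} (h : a ∉ bs) :
    shadow (ren1 a b) bs = ren1 a b := by
  funext x
  by_cases hx : x ∈ bs
  · have : x ≠ a := fun he => h (he ▸ hx)
    simp [shadow, hx, ren1, this]
  · simp [shadow, hx]

lemma joinBinds_map_subst (σ : Sub) (f : Option Term → Option Term)
    (J : List (Option Term × List Pat)) :
    joinBinds (J.map fun j => (f j.1, j.2.map (Pat.subst σ))) = joinBinds J := by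
  induction J with
  | nil => rfl
  | cons j J ih =>
      simp only [List.map_cons, joinBinds, List.foldr_cons] at *
      rw [ih]
      congr 1
      induction j.2 with
      | nil => rfl
      | cons p ps ihp => simp [Pat.subst_binds, ihp]

lemma Proc.subst_id (P : Proc) : P.subst (fun x => Term.name x) = P := by
  induction P with
  | nil => rfl
  | out ch ts P ih =>
      simp only [Proc.subst, ih]
      have h1 : ch.map (Term.subst fun x => Term.name x) = ch := by
        cases ch <;> simp [Term.subst_id]
      rw [h1, listMapSelf (fun t _ => Term.subst_id t)]
  | inp J P ih =>
      simp only [Proc.subst, shadow_id, ih]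
      congr 1
      apply listMapSelf
      intro j _
      have h1 : j.1.map (Term.subst fun x => Term.name x) = j.1 := by
        cases j.1 <;> simp [Term.subst_id]
      have h2 : j.2.map (Pat.subst fun x => Term.name x) = j.2 :=
        listMapSelf (fun p _ => Pat.subst_id p)
      rw [h1, h2]
  | res a P ih => simp [Proc.subst, shadow_id, ih]
  | par P Q ihP ihQ => simp [Proc.subst, ihP, ihQ]
  | ite s t P Q ihP ihQ => simp [Proc.subst, Term.subst_id, ihP, ihQ]
  | repl P ih => simp [Proc.subst, ih]
  | succ => rfl

end Aux


section Abstraction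

/-- Names of a list of optional channel terms. -/
def lNames (l : List (Option Term)) : Finset Name := l.foldr (fun c a => optNames c ∪ a) ∅

lemma mem_lNames {x : Name} {l : List (Option Term)} :
    x ∈ lNames l ↔ ∃ c ∈ l, x ∈ optNames c := by
  induction l with
  | nil => simp [lNames]
  | cons c l ih =>
      simp only [lNames, List.foldr_cons] at *
      simp [Finset.mem_union, ih]

/-- Top-level output channels (multiset). -/
def outC : Proc → Multiset (Option Term)
  | .out ch _ _ => {ch}
  | .par P Q => outC P + outC Q
  | .res _ P => outC P
  | .ite s t P Q => if s = t then outC P else outC Q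
  | _ => 0

/-- Top-level input channel lists (set), restricted-channel inputs removed. -/
def inpC : Proc → Set (List (Option Term))
  | .inp J _ => {J.map Prod.fst}
  | .par P Q => inpC P ∪ inpC Q
  | .res a P => {l | l ∈ inpC P ∧ a ∉ lNames l}
  | .ite s t P Q => if s = t then inpC P else inpC Q
  | .repl P => inpC P
  | _ => ∅

/-- Structural safety: top-level output channels are names, are not captured by
restrictions, and do not occur under replication. -/
def Safe : Proc → Prop
  | .out ch _ _ => ∃ n, ch = some (Term.name n)
  | .par P Q => Safe P ∧ Safe Q
  | .res a P => Safe P ∧ ∀ c ∈ outC P, a ∉ optNames c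
  | .ite s t P Q => if s = t then Safe P else Safe Q
  | .repl P => Safe P ∧ outC P = 0
  | _ => True

lemma lNames_map_fst_subset_joinFrees (J : List (Option Term × List Pat)) :
    lNames (J.map Prod.fst) ⊆ joinFrees J := by
  induction J with
  | nil => simp [lNames, joinFrees]
  | cons j J ih =>
      intro x hx
      simp only [List.map_cons, lNames, List.foldr_cons, Finset.mem_union] at hx
      simp only [joinFrees, List.foldr_cons, Finset.mem_union]
      rcases hx with hx | hx
      · exact Or.inl (Or.inl hx)
      · exact Or.inr (ih hx)

lemma outC_names_subset_anames {P : Proc} {c : Option Term} (h : c ∈ outC P) :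
    optNames c ⊆ P.anames := by
  induction P with
  | out ch ts P _ =>
      simp only [outC, Multiset.mem_singleton] at h
      subst h
      simp [Proc.anames]
  | par P Q ihP ihQ =>
      simp only [outC, Multiset.mem_add] at h
      rcases h with h | h
      · exact (ihP h).trans (by simp [Proc.anames])
      · exact (ihQ h).trans (by simp [Proc.anames])
  | res a P ih =>
      exact (ih h).trans (by simp [Proc.anames, Finset.subset_insert])
  | ite s t P Q ihP ihQ =>
      simp only [outC] at h
      split at h
      · exact (ihP h).trans (by intro x hx; simp only [Proc.anames, Finset.mem_union]; tauto)
      · exact (ihQ h).trans (by intro x hx; simp only [Proc.anames, Finset.mem_union]; tauto)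
  | _ => simp [outC] at h

lemma inpC_lNames_subset_anames {P : Proc} {l : List (Option Term)} (h : l ∈ inpC P) :
    lNames l ⊆ P.anames := by
  induction P with
  | inp J P _ =>
      simp only [inpC, Set.mem_singleton_iff] at h
      subst h
      exact (lNames_map_fst_subset_joinFrees J).trans (by simp [Proc.anames])
  | par P Q ihP ihQ =>
      rcases h with h | h
      · exact (ihP h).trans (by simp [Proc.anames])
      · exact (ihQ h).trans (by simp [Proc.anames])
  | res a P ih => exact (ih h.1).trans (by simp [Proc.anames, Finset.subset_insert])
  | ite s t P Q ihP ihQ =>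
      simp only [inpC] at h
      split at h
      · exact (ihP h).trans (by intro x hx; simp only [Proc.anames, Finset.mem_union]; tauto)
      · exact (ihQ h).trans (by intro x hx; simp only [Proc.anames, Finset.mem_union]; tauto)
  | repl P ih => exact ih h
  | _ => simp [inpC] at h

lemma inpC_lNames_subset_fnames {P : Proc} {l : List (Option Term)} (h : l ∈ inpC P) :
    lNames l ⊆ P.fnames := by
  induction P with
  | inp J P _ =>
      simp only [inpC, Set.mem_singleton_iff] at h
      subst h
      exact (lNames_map_fst_subset_joinFrees J).trans (by simp [Proc.fnames])
  | par P Q ihP ihQ =>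
      rcases h with h | h
      · exact (ihP h).trans (by simp [Proc.fnames])
      · exact (ihQ h).trans (by simp [Proc.fnames])
  | res a P ih =>
      intro x hx
      simp only [Proc.fnames, Finset.mem_erase]
      exact ⟨fun he => h.2 (he ▸ hx), ih h.1 hx⟩
  | ite s t P Q ihP ihQ =>
      simp only [inpC] at h
      split at h
      · exact (ihP h).trans (by intro x hx; simp only [Proc.fnames, Finset.mem_union]; tauto)
      · exact (ihQ h).trans (by intro x hx; simp only [Proc.fnames, Finset.mem_union]; tauto)
  | repl P ih => exact ih h
  | _ => simp [inpC] at h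

lemma outC_names_subset_fnames {P : Proc} (hs : Safe P) {c : Option Term} (h : c ∈ outC P) :
    optNames c ⊆ P.fnames := by
  induction P with
  | out ch ts P _ =>
      simp only [outC, Multiset.mem_singleton] at h
      subst h
      simp [Proc.fnames]
  | par P Q ihP ihQ =>
      simp only [outC, Multiset.mem_add] at h
      rcases h with h | h
      · exact (ihP hs.1 h).trans (by simp [Proc.fnames])
      · exact (ihQ hs.2 h).trans (by simp [Proc.fnames])
  | res a P ih =>
      intro x hx
      simp only [Proc.fnames, Finset.mem_erase]
      exact ⟨fun he => hs.2 c h (he ▸ hx), ih hs.1 h hx⟩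
  | ite s t P Q ihP ihQ =>
      simp only [outC, Safe] at h hs
      split at h
      · rw [if_pos (by assumption)] at hs
        exact (ihP hs h).trans (by intro x hx; simp only [Proc.fnames, Finset.mem_union]; tauto)
      · rw [if_neg (by assumption)] at hs
        exact (ihQ hs h).trans (by intro x hx; simp only [Proc.fnames, Finset.mem_union]; tauto)
  | repl P ih =>
      simp only [outC] at h
      simp at h
  | _ => simp [outC] at h

lemma fnames_subset_anames (P : Proc) : P.fnames ⊆ P.anames := by
  induction P with
  | nil => simp [Proc.fnames, Proc.anames]
  | out ch ts P ih =>
      simp only [Proc.fnames, Proc.anames]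
      intro x hx
      simp only [Finset.mem_union] at hx ⊢
      tauto
  | inp J P ih =>
      simp only [Proc.fnames, Proc.anames]
      intro x hx
      simp only [Finset.mem_union, Finset.mem_sdiff] at hx ⊢
      rcases hx with hx | ⟨hx, _⟩
      · tauto
      · exact Or.inr (ih hx)
  | res a P ih =>
      simp only [Proc.fnames, Proc.anames]
      intro x hx
      simp only [Finset.mem_erase] at hx
      exact Finset.mem_insert_of_mem (ih hx.2)
  | par P Q ihP ihQ =>
      simp only [Proc.fnames, Proc.anames]
      intro x hx
      simp only [Finset.mem_union] at hx ⊢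
      tauto
  | ite s t P Q ihP ihQ =>
      simp only [Proc.fnames, Proc.anames]
      intro x hx
      simp only [Finset.mem_union] at hx ⊢
      tauto
  | repl P ih => exact ih
  | succ => simp [Proc.fnames, Proc.anames]

end Abstraction


section RenInv

variable {a b : Name}

lemma optNames_map_ren1_of_not_mem {c : Option Term} (h : a ∉ optNames c) :
    c.map (Term.subst (ren1 a b)) = c := by
  cases c with
  | none => rfl
  | some t =>
      show some (Term.subst (ren1 a b) t) = some t
      rw [Term.subst_ren1_of_not_mem h]

lemma lNames_map_ren1_of_not_mem {l : List (Option Term)} (h : a ∉ lNames l) :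
    l.map (Option.map (Term.subst (ren1 a b))) = l := by
  apply listMapSelf
  intro c hc
  apply optNames_map_ren1_of_not_mem
  exact fun ha => h (mem_lNames.mpr ⟨c, hc, ha⟩)

lemma mem_lNames_map_ren1_self {l : List (Option Term)} (h : a ∈ lNames l) :
    b ∈ lNames (l.map (Option.map (Term.subst (ren1 a b)))) := by
  rcases mem_lNames.mp h with ⟨c, hc, ha⟩
  apply mem_lNames.mpr
  refine ⟨c.map (Term.subst (ren1 a b)), List.mem_map_of_mem hc, ?_⟩
  cases c with
  | none => simp [optNames] at ha
  | some t => exact Term.mem_names_subst_ren1_self ha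

lemma mem_lNames_map_ren1 {x : Name} (h1 : x ≠ a) (h2 : x ≠ b) (l : List (Option Term)) :
    x ∈ lNames (l.map (Option.map (Term.subst (ren1 a b)))) ↔ x ∈ lNames l := by
  simp only [mem_lNames]
  constructor
  · rintro ⟨c', hc', hx⟩
    rcases List.mem_map.mp hc' with ⟨c, hc, rfl⟩
    refine ⟨c, hc, ?_⟩
    cases c with
    | none => simpa [optNames] using hx
    | some t => exact (Term.mem_names_subst_ren1 h1 h2 t).mp hx
  · rintro ⟨c, hc, hx⟩
    refine ⟨c.map (Term.subst (ren1 a b)), List.mem_map_of_mem hc, ?_⟩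
    cases c with
    | none => simpa [optNames] using hx
    | some t => exact (Term.mem_names_subst_ren1 h1 h2 t).mpr hx

/-- `outC` of a renamed process is zero iff it was. -/
lemma outC_subst_ren1_eq_zero (hb : b ∉ Proc.anames P) :
    outC (P.subst (ren1 a b)) = 0 ↔ outC P = 0 := by
  induction P with
  | out ch ts P _ => simp [Proc.subst, outC]
  | par P Q ihP ihQ =>
      have hbP : b ∉ P.anames := fun h => hb (by simp [Proc.anames, h])
      have hbQ : b ∉ Q.anames := fun h => hb (by simp [Proc.anames, h])
      simp [Proc.subst, outC, add_eq_zero, ihP hbP, ihQ hbQ]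
  | res a' P ih =>
      have hbP : b ∉ P.anames := fun h => hb (by simp [Proc.anames, h])
      by_cases ha : a' = a
      · subst ha
        rw [show (Proc.res a' P).subst (ren1 a' b)
              = Proc.res a' (P.subst (shadow (ren1 a' b) [a'])) from rfl,
          shadow_ren1_mem (by simp), Proc.subst_id]
      · rw [show (Proc.res a' P).subst (ren1 a b)
              = Proc.res a' (P.subst (shadow (ren1 a b) [a'])) from rfl,
          shadow_ren1_not_mem (fun h => (by first | exact ha (List.mem_singleton.mp h).symm | exact hsh (List.mem_singleton.mp h).symm))]
        simpa [outC] using ih hbP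
  | ite s t P Q ihP ihQ =>
      have hbP : b ∉ P.anames := fun h => hb (by simp [Proc.anames, h])
      have hbQ : b ∉ Q.anames := fun h => hb (by simp [Proc.anames, h])
      have hbs : b ∉ s.names := fun h => hb (by simp [Proc.anames, h])
      have hbt : b ∉ t.names := fun h => hb (by simp [Proc.anames, h])
      simp only [Proc.subst, outC]
      simp only [Term.subst_ren1_inj hbs hbt]
      split
      · exact ihP hbP
      · exact ihQ hbQ
  | _ => simp [Proc.subst, outC]

/-- `outC` is preserved by fresh renaming when the renamed name does not occur in
top-level output channels. -/
lemma outC_subst_ren1 (hb : b ∉ Proc.anames P) (ha : ∀ c ∈ outC P, a ∉ optNames c) :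
    outC (P.subst (ren1 a b)) = outC P := by
  induction P with
  | out ch ts P _ =>
      simp only [Proc.subst, outC, Multiset.singleton_inj]
      exact optNames_map_ren1_of_not_mem (ha ch (by simp [outC]))
  | par P Q ihP ihQ =>
      have hbP : b ∉ P.anames := fun h => hb (by simp [Proc.anames, h])
      have hbQ : b ∉ Q.anames := fun h => hb (by simp [Proc.anames, h])
      have haP : ∀ c ∈ outC P, a ∉ optNames c := fun c hc => ha c (by simp [outC, hc])
      have haQ : ∀ c ∈ outC Q, a ∉ optNames c := fun c hc => ha c (by simp [outC, hc])
      simp [Proc.subst, outC, ihP hbP haP, ihQ hbQ haQ]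
  | res a' P ih =>
      have hbP : b ∉ P.anames := fun h => hb (by simp [Proc.anames, h])
      by_cases hsh : a' = a
      · subst hsh
        rw [show (Proc.res a' P).subst (ren1 a' b)
              = Proc.res a' (P.subst (shadow (ren1 a' b) [a'])) from rfl,
          shadow_ren1_mem (by simp), Proc.subst_id]
      · rw [show (Proc.res a' P).subst (ren1 a b)
              = Proc.res a' (P.subst (shadow (ren1 a b) [a'])) from rfl,
          shadow_ren1_not_mem (fun h => (by first | exact ha (List.mem_singleton.mp h).symm | exact hsh (List.mem_singleton.mp h).symm))]
        simpa [outC] using ih hbP (fun c hc => ha c (by simpa [outC] using hc))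
  | ite s t P Q ihP ihQ =>
      have hbP : b ∉ P.anames := fun h => hb (by simp [Proc.anames, h])
      have hbQ : b ∉ Q.anames := fun h => hb (by simp [Proc.anames, h])
      have hbs : b ∉ s.names := fun h => hb (by simp [Proc.anames, h])
      have hbt : b ∉ t.names := fun h => hb (by simp [Proc.anames, h])
      simp only [Proc.subst, outC]
      simp only [Term.subst_ren1_inj hbs hbt]
      by_cases hst : s = t
      · rw [if_pos hst, if_pos hst]
        exact ihP hbP (fun c hc => ha c (by simpa [outC, if_pos hst] using hc))
      · rw [if_neg hst, if_neg hst]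
        exact ihQ hbQ (fun c hc => ha c (by simpa [outC, if_neg hst] using hc))
  | _ => simp [Proc.subst, outC]

/-- `inpC` of a renamed process. -/
lemma inpC_subst_ren1 (hb : b ∉ Proc.anames P) :
    inpC (P.subst (ren1 a b))
      = (fun l => l.map (Option.map (Term.subst (ren1 a b)))) '' inpC P := by
  induction P with
  | inp J P _ =>
      simp only [Proc.subst, inpC, Set.image_singleton, Set.singleton_eq_singleton_iff]
      simp [List.map_map]
  | par P Q ihP ihQ =>
      have hbP : b ∉ P.anames := fun h => hb (by simp [Proc.anames, h])
      have hbQ : b ∉ Q.anames := fun h => hb (by simp [Proc.anames, h])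
      simp [Proc.subst, inpC, ihP hbP, ihQ hbQ, Set.image_union]
  | res a' P ih =>
      have hbP : b ∉ P.anames := fun h => hb (by simp [Proc.anames, h])
      have hba' : b ≠ a' := fun h => hb (by simp [Proc.anames, h])
      by_cases hsh : a' = a
      · subst hsh
        rw [show (Proc.res a' P).subst (ren1 a' b)
              = Proc.res a' (P.subst (shadow (ren1 a' b) [a'])) from rfl,
          shadow_ren1_mem (by simp), Proc.subst_id]
        ext l
        simp only [inpC, Set.mem_setOf_eq, Set.mem_image]
        constructor
        · rintro ⟨hl, hal⟩
          exact ⟨l, ⟨hl, hal⟩, lNames_map_ren1_of_not_mem hal⟩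
        · rintro ⟨l', ⟨hl', hal'⟩, rfl⟩
          rw [lNames_map_ren1_of_not_mem hal']
          exact ⟨hl', hal'⟩
      · rw [show (Proc.res a' P).subst (ren1 a b)
              = Proc.res a' (P.subst (shadow (ren1 a b) [a'])) from rfl,
          shadow_ren1_not_mem (fun h => (by first | exact ha (List.mem_singleton.mp h).symm | exact hsh (List.mem_singleton.mp h).symm))]
        ext l
        simp only [inpC, Set.mem_setOf_eq, Set.mem_image, ih hbP]
        constructor
        · rintro ⟨⟨l', hl', rfl⟩, hal⟩
          refine ⟨l', ⟨hl', ?_⟩, rfl⟩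
          exact fun h => hal ((mem_lNames_map_ren1 (Ne.symm (fun h' => hsh h'.symm))
            hba'.symm l').mpr h)
        · rintro ⟨l', ⟨hl', hal'⟩, rfl⟩
          refine ⟨⟨l', hl', rfl⟩, ?_⟩
          exact fun h => hal' ((mem_lNames_map_ren1 (Ne.symm (fun h' => hsh h'.symm))
            hba'.symm l').mp h)
  | ite s t P Q ihP ihQ =>
      have hbP : b ∉ P.anames := fun h => hb (by simp [Proc.anames, h])
      have hbQ : b ∉ Q.anames := fun h => hb (by simp [Proc.anames, h])
      have hbs : b ∉ s.names := fun h => hb (by simp [Proc.anames, h])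
      have hbt : b ∉ t.names := fun h => hb (by simp [Proc.anames, h])
      simp only [Proc.subst, inpC]
      simp only [Term.subst_ren1_inj hbs hbt]
      split
      · exact ihP hbP
      · exact ihQ hbQ
  | repl P ih =>
      have hbP : b ∉ P.anames := fun h => hb (by simp [Proc.anames, h])
      simpa [Proc.subst, inpC] using ih hbP
  | _ => simp [Proc.subst, inpC]

lemma optIsName_map_ren1 {ch : Option Term} :
    (∃ n, ch.map (Term.subst (ren1 a b)) = some (Term.name n)) ↔
      ∃ n, ch = some (Term.name n) := by
  cases ch with
  | none => simp
  | some t =>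
      cases t with
      | name m => by_cases hm : m = a <;> simp [Term.subst, ren1, hm]
      | comp s u => simp [Term.subst]

/-- `Safe` is preserved by fresh renaming. -/
lemma Safe_subst_ren1 (hb : b ∉ Proc.anames P) (ha : ∀ c ∈ outC P, a ∉ optNames c) :
    Safe (P.subst (ren1 a b)) ↔ Safe P := by
  induction P with
  | out ch ts P _ => simpa [Proc.subst, Safe] using optIsName_map_ren1
  | par P Q ihP ihQ =>
      have hbP : b ∉ P.anames := fun h => hb (by simp [Proc.anames, h])
      have hbQ : b ∉ Q.anames := fun h => hb (by simp [Proc.anames, h])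
      have haP : ∀ c ∈ outC P, a ∉ optNames c := fun c hc => ha c (by simp [outC, hc])
      have haQ : ∀ c ∈ outC Q, a ∉ optNames c := fun c hc => ha c (by simp [outC, hc])
      simp [Proc.subst, Safe, ihP hbP haP, ihQ hbQ haQ]
  | res a' P ih =>
      have hbP : b ∉ P.anames := fun h => hb (by simp [Proc.anames, h])
      by_cases hsh : a' = a
      · subst hsh
        rw [show (Proc.res a' P).subst (ren1 a' b)
              = Proc.res a' (P.subst (shadow (ren1 a' b) [a'])) from rfl,
          shadow_ren1_mem (by simp), Proc.subst_id]
      · rw [show (Proc.res a' P).subst (ren1 a b)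
              = Proc.res a' (P.subst (shadow (ren1 a b) [a'])) from rfl,
          shadow_ren1_not_mem (fun h => (by first | exact ha (List.mem_singleton.mp h).symm | exact hsh (List.mem_singleton.mp h).symm))]
        have ha' : ∀ c ∈ outC P, a ∉ optNames c := fun c hc => ha c (by simpa [outC] using hc)
        simp only [Safe, outC_subst_ren1 hbP ha', ih hbP ha']
  | ite s t P Q ihP ihQ =>
      have hbP : b ∉ P.anames := fun h => hb (by simp [Proc.anames, h])
      have hbQ : b ∉ Q.anames := fun h => hb (by simp [Proc.anames, h])
      have hbs : b ∉ s.names := fun h => hb (by simp [Proc.anames, h])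
      have hbt : b ∉ t.names := fun h => hb (by simp [Proc.anames, h])
      simp only [Proc.subst, Safe]
      simp only [Term.subst_ren1_inj hbs hbt]
      by_cases hst : s = t
      · rw [if_pos hst, if_pos hst]
        exact ihP hbP (fun c hc => ha c (by simpa [outC, if_pos hst] using hc))
      · rw [if_neg hst, if_neg hst]
        exact ihQ hbQ (fun c hc => ha c (by simpa [outC, if_neg hst] using hc))
  | repl P ih =>
      have hbP : b ∉ P.anames := fun h => hb (by simp [Proc.anames, h])
      simp only [Proc.subst, Safe]
      by_cases h0 : outC P = 0
      · rw [outC_subst_ren1 hbP (by simp [h0])]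
        simp [h0, ih hbP (by simp [h0])]
      · have h0' : ¬ outC (P.subst (ren1 a b)) = 0 :=
          fun h => h0 ((outC_subst_ren1_eq_zero hbP).mp h)
        simp [h0, h0']
  | _ => simp [Proc.subst, Safe]

/-- Converse safety transfer along a fresh renaming. -/
lemma Safe_subst_ren1_back (hb : b ∉ Proc.anames P)
    (hs : Safe (P.subst (ren1 a b)))
    (hbc : ∀ c ∈ outC (P.subst (ren1 a b)), b ∉ optNames c) :
    Safe P ∧ ∀ c ∈ outC P, a ∉ optNames c := by
  induction P with
  | out ch ts P _ =>
      simp only [Proc.subst, Safe] at hs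
      refine ⟨optIsName_map_ren1.mp hs, ?_⟩
      intro c hc ha
      simp only [outC, Multiset.mem_singleton] at hc
      subst hc
      exact hbc (c.map (Term.subst (ren1 a b))) (by simp [Proc.subst, outC])
        (by cases c with
          | none => simpa [optNames] using ha
          | some t => exact Term.mem_names_subst_ren1_self ha)
  | par P Q ihP ihQ =>
      have hbP : b ∉ P.anames := fun h => hb (by simp [Proc.anames, h])
      have hbQ : b ∉ Q.anames := fun h => hb (by simp [Proc.anames, h])
      simp only [Proc.subst, Safe, outC, Multiset.mem_add] at hs hbc ⊢
      have hP := ihP hbP hs.1 (fun c hc => hbc c (Or.inl hc))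
      have hQ := ihQ hbQ hs.2 (fun c hc => hbc c (Or.inr hc))
      exact ⟨⟨hP.1, hQ.1⟩, fun c hc => hc.elim (hP.2 c) (hQ.2 c)⟩
  | res a' P ih =>
      have hbP : b ∉ P.anames := fun h => hb (by simp [Proc.anames, h])
      by_cases hsh : a' = a
      · subst hsh
        rw [show (Proc.res a' P).subst (ren1 a' b)
              = Proc.res a' (P.subst (shadow (ren1 a' b) [a'])) from rfl,
          shadow_ren1_mem (by simp), Proc.subst_id] at hs hbc
        exact ⟨hs, by simpa [outC] using hs.2⟩
      · rw [show (Proc.res a' P).subst (ren1 a b)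
              = Proc.res a' (P.subst (shadow (ren1 a b) [a'])) from rfl,
          shadow_ren1_not_mem (fun h => (by first | exact ha (List.mem_singleton.mp h).symm | exact hsh (List.mem_singleton.mp h).symm))] at hs hbc
        simp only [Safe, outC] at hs hbc ⊢
        have hP := ih hbP hs.1 hbc
        have houtC := outC_subst_ren1 hbP hP.2
        refine ⟨⟨hP.1, ?_⟩, hP.2⟩
        intro c hc
        exact hs.2 c (houtC ▸ hc)
  | ite s t P Q ihP ihQ =>
      have hbP : b ∉ P.anames := fun h => hb (by simp [Proc.anames, h])
      have hbQ : b ∉ Q.anames := fun h => hb (by simp [Proc.anames, h])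
      have hbs : b ∉ s.names := fun h => hb (by simp [Proc.anames, h])
      have hbt : b ∉ t.names := fun h => hb (by simp [Proc.anames, h])
      simp only [Proc.subst, Safe, outC] at hs hbc ⊢
      simp only [Term.subst_ren1_inj hbs hbt] at hs hbc
      by_cases hst : s = t
      · rw [if_pos hst] at hs hbc ⊢
        rw [if_pos hst]
        exact ihP hbP hs hbc
      · rw [if_neg hst] at hs hbc ⊢
        rw [if_neg hst]
        exact ihQ hbQ hs hbc
  | repl P ih =>
      have hbP : b ∉ P.anames := fun h => hb (by simp [Proc.anames, h])
      simp only [Proc.subst, Safe, outC] at hs hbc ⊢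
      have h0 : outC P = 0 := (outC_subst_ren1_eq_zero hbP).mp hs.2
      have hP := ih hbP hs.1 (by rw [outC_subst_ren1 hbP (by simp [h0]), h0]; simp)
      exact ⟨⟨hP.1, h0⟩, by simp⟩
  | _ => simp [Safe, outC]

end RenInv


section CongrInv

/-- Structural congruence preserves the safety predicate, and (on safe processes)
the top-level output and input channel abstractions. -/
theorem congr_inv {P Q : Proc} (h : Congr P Q) :
    (Safe P ↔ Safe Q) ∧ (Safe P → outC P = outC Q ∧ inpC P = inpC Q) := by
  induction h with
  | refl P => exact ⟨Iff.rfl, fun _ => ⟨rfl, rfl⟩⟩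
  | symm h ih =>
      refine ⟨ih.1.symm, fun hP => ?_⟩
      obtain ⟨h1, h2⟩ := ih.2 (ih.1.symm.mp hP)
      exact ⟨h1.symm, h2.symm⟩
  | trans h1 h2 ih1 ih2 =>
      refine ⟨ih1.1.trans ih2.1, fun hP => ?_⟩
      obtain ⟨e1, e2⟩ := ih1.2 hP
      obtain ⟨e3, e4⟩ := ih2.2 (ih1.1.mp hP)
      exact ⟨e1.trans e3, e2.trans e4⟩
  | par_nil P => exact ⟨by simp [Safe], fun _ => ⟨by simp [outC], by simp [inpC]⟩⟩
  | par_comm P Q =>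
      exact ⟨by simp [Safe, and_comm], fun _ => ⟨by simp [outC, add_comm],
        by simp [inpC, Set.union_comm]⟩⟩
  | par_assoc P Q R =>
      exact ⟨by simp [Safe, and_assoc], fun _ => ⟨by simp [outC, add_assoc],
        by simp [inpC, Set.union_assoc]⟩⟩
  | ite_eq s P Q =>
      exact ⟨by simp [Safe], fun _ => ⟨by simp [outC], by simp [inpC]⟩⟩
  | ite_ne hst P Q =>
      exact ⟨by simp [Safe, hst], fun _ => ⟨by simp [outC, hst], by simp [inpC, hst]⟩⟩
  | res_nil a => exact ⟨by simp [Safe, outC], fun _ => ⟨by simp [outC], by simp [inpC]⟩⟩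
  | res_swap a b P =>
      refine ⟨by simp [Safe, outC]; tauto, fun _ => ⟨by simp [outC], ?_⟩⟩
      ext l
      simp only [inpC, Set.mem_setOf_eq]
      tauto
  | @res_par P a Q h =>
      have hfree : ∀ {x : Name}, x ∈ P.fnames → x ≠ a := fun hx he => h (he ▸ hx)
      constructor
      · constructor
        · rintro ⟨hP, hQ, hc⟩
          refine ⟨⟨hP, hQ⟩, ?_⟩
          intro c hc'
          simp only [outC, Multiset.mem_add] at hc'
          rcases hc' with hc' | hc'
          · exact fun ha => h (outC_names_subset_fnames hP hc' ha)
          · exact hc c hc'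
        · rintro ⟨⟨hP, hQ⟩, hc⟩
          exact ⟨hP, hQ, fun c hc' => hc c (by simp [outC, hc'])⟩
      · intro _
        refine ⟨by simp [outC], ?_⟩
        ext l
        simp only [inpC, Set.mem_setOf_eq, Set.mem_union]
        constructor
        · rintro (hl | ⟨hl, hal⟩)
          · exact ⟨Or.inl hl, fun ha => h (inpC_lNames_subset_fnames hl ha)⟩
          · exact ⟨Or.inr hl, hal⟩
        · rintro ⟨hl | hl, hal⟩
          · exact Or.inl hl
          · exact Or.inr ⟨hl, hal⟩
  | repl_unfold P =>
      refine ⟨by simp [Safe] <;> tauto, fun hS => ?_⟩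
      obtain ⟨hP, h0⟩ := hS
      exact ⟨by simp [outC, h0], by simp [inpC]⟩
  | @alpha_res P b a hb =>
      constructor
      · constructor
        · rintro ⟨hS, hA⟩
          refine ⟨(Safe_subst_ren1 hb hA).mpr hS, ?_⟩
          rw [outC_subst_ren1 hb hA]
          exact fun c hc hbm => hb (outC_names_subset_anames hc hbm)
        · rintro ⟨hS, hB⟩
          obtain ⟨h1, h2⟩ := Safe_subst_ren1_back hb hS hB
          exact ⟨h1, h2⟩
      · rintro ⟨hS, hA⟩
        refine ⟨by simpa [outC] using (outC_subst_ren1 hb hA).symm, ?_⟩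
        ext l
        simp only [inpC, Set.mem_setOf_eq, inpC_subst_ren1 hb, Set.mem_image]
        constructor
        · rintro ⟨hl, hal⟩
          refine ⟨⟨l, hl, lNames_map_ren1_of_not_mem hal⟩, ?_⟩
          exact fun hbm => hb (inpC_lNames_subset_anames hl hbm)
        · rintro ⟨⟨l', hl', rfl⟩, hbm⟩
          have hal' : a ∉ lNames l' := fun ha => hbm (mem_lNames_map_ren1_self ha)
          rw [lNames_map_ren1_of_not_mem hal']
          exact ⟨hl', hal'⟩
  | @alpha_inp J x P b hx hb =>
      have hJ : (renameBindJoin x b J).map Prod.fst = J.map Prod.fst := by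
        simp only [renameBindJoin, List.map_map]
        exact List.map_congr_left fun j _ => rfl
      exact ⟨by simp [Safe], fun _ => ⟨by simp [outC], by simp [inpC, hJ]⟩⟩
  | ctx_out h ih => exact ⟨by simp [Safe], fun _ => ⟨by simp [outC], by simp [inpC]⟩⟩
  | ctx_inp h ih => exact ⟨by simp [Safe], fun _ => ⟨by simp [outC], by simp [inpC]⟩⟩
  | @ctx_res P P' a h ih =>
      constructor
      · constructor
        · rintro ⟨hS, hA⟩
          exact ⟨ih.1.mp hS, (ih.2 hS).1 ▸ hA⟩
        · rintro ⟨hS, hA⟩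
          have hS' := ih.1.mpr hS
          exact ⟨hS', (ih.2 hS').1.symm ▸ hA⟩
      · rintro ⟨hS, hA⟩
        obtain ⟨e1, e2⟩ := ih.2 hS
        exact ⟨by simpa [outC] using e1, by simp only [inpC, e2]⟩
  | ctx_par h1 h2 ih1 ih2 =>
      constructor
      · exact and_congr ih1.1 ih2.1
      · rintro ⟨hS1, hS2⟩
        obtain ⟨e1, e2⟩ := ih1.2 hS1
        obtain ⟨e3, e4⟩ := ih2.2 hS2
        exact ⟨by simp [outC, e1, e3], by simp [inpC, e2, e4]⟩
  | @ctx_ite P P' Q Q' s t h1 h2 ih1 ih2 =>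
      by_cases hst : s = t
      · refine ⟨by simp [Safe, hst, ih1.1], fun hS => ?_⟩
        have hS' : Safe P := by simpa [Safe, hst] using hS
        obtain ⟨e1, e2⟩ := ih1.2 hS'
        exact ⟨by simp [outC, hst, e1], by simp [inpC, hst, e2]⟩
      · refine ⟨by simp [Safe, hst, ih2.1], fun hS => ?_⟩
        have hS' : Safe Q := by simpa [Safe, hst] using hS
        obtain ⟨e1, e2⟩ := ih2.2 hS'
        exact ⟨by simp [outC, hst, e1], by simp [inpC, hst, e2]⟩
  | ctx_repl h ih =>
      constructor
      · constructor
        · rintro ⟨hS, h0⟩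
          exact ⟨ih.1.mp hS, (ih.2 hS).1 ▸ h0⟩
        · rintro ⟨hS, h0⟩
          have hS' := ih.1.mpr hS
          exact ⟨hS', (ih.2 hS').1.symm ▸ h0⟩
      · rintro ⟨hS, h0⟩
        exact ⟨by simp [outC], by simpa [inpC] using (ih.2 hS).2⟩

end CongrInv


section RedInv

lemma joinMatch_map_fst {os : List (Option Term × List Term)}
    {J : List (Option Term × List Pat)} {l : List (Name × Term)}
    (h : joinMatch os J = some l) : os.map Prod.fst = J.map Prod.fst := by
  induction os generalizing J l with
  | nil =>
      cases J with
      | nil => rfl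
      | cons j J => simp [joinMatch] at h
  | cons o os ih =>
      cases J with
      | nil => obtain ⟨c, ts⟩ := o; simp [joinMatch] at h
      | cons j J =>
          obtain ⟨c, ts⟩ := o
          obtain ⟨c', ps⟩ := j
          by_cases hc : c = c'
          · subst hc
            simp only [joinMatch, if_pos rfl] at h
            cases hp : polyMatch ts ps with
            | none => simp [hp] at h
            | some l1 =>
                cases hj : joinMatch os J with
                | none => simp [hp, hj] at h
                | some l2 => simp [ih hj]
          · simp [joinMatch, hc] at h

lemma outC_parList_outs (outs : List (Option Term × List Term × Proc)) :
    outC (parList (outs.map fun o => Proc.out o.1 o.2.1 o.2.2))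
      = (↑(outs.map Prod.fst) : Multiset (Option Term)) := by
  induction outs with
  | nil => rfl
  | cons o os ih =>
      simp only [List.map_cons, parList, List.foldr_cons] at *
      show ({o.1} : Multiset (Option Term)) + _ = _
      rw [ih]
      simp [Multiset.singleton_add]

theorem red_enabled {X Y : Proc} (h : Red X Y) (hS : Safe X) :
    ∃ l ∈ inpC X, (l : Multiset (Option Term)) ≤ outC X := by
  induction h with
  | interact outs J Q l hne hm =>
      refine ⟨J.map Prod.fst, by simp [inpC], ?_⟩
      have hf := joinMatch_map_fst hm
      have heq : outs.map Prod.fst = J.map Prod.fst := by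
        rw [← hf]; simp [List.map_map]
      show _ ≤ outC (Proc.par _ _)
      rw [show outC (Proc.par (parList (outs.map fun o => Proc.out o.1 o.2.1 o.2.2))
            (Proc.inp J Q)) = outC (parList (outs.map fun o => Proc.out o.1 o.2.1 o.2.2)) + 0
          from rfl, outC_parList_outs, heq]
      simp
  | @ctx_par P P' Q h ih =>
      obtain ⟨l, hl, hle⟩ := ih hS.1
      exact ⟨l, Or.inl hl, le_trans hle (by show outC P ≤ outC P + outC Q; simp)⟩
  | @ctx_res P P' a h ih =>
      obtain ⟨l, hl, hle⟩ := ih hS.1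
      have hal : a ∉ lNames l := by
        intro ha
        obtain ⟨c, hc, hmem⟩ := mem_lNames.mp ha
        have hcout : c ∈ outC P := Multiset.mem_of_le hle (by simp [hc])
        exact hS.2 c hcout hmem
      exact ⟨l, ⟨hl, hal⟩, hle⟩
  | @struct P Q Q' P' h1 h2 h3 ih =>
      have hSQ : Safe Q := (congr_inv h1).1.mp hS
      obtain ⟨e1, e2⟩ := (congr_inv h1).2 hS
      obtain ⟨l, hl, hle⟩ := ih hSQ
      exact ⟨l, e2 ▸ hl, e1 ▸ hle⟩

theorem not_reduces {X : Proc} (hS : Safe X)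
    (h : ∀ l ∈ inpC X, ¬ ((l : Multiset (Option Term)) ≤ outC X)) : ¬ Reduces X := by
  rintro ⟨Y, hred⟩
  obtain ⟨l, hl, hle⟩ := red_enabled hred hS
  exact h l hl hle

end RedInv


section AnamesSubst

variable {a b : Name}

lemma tsNames_map_ren1_subset (ts : List Term) :
    (ts.map (Term.subst (ren1 a b))).foldr (fun (t : Term) s => t.names ∪ s) ∅
      ⊆ insert b (ts.foldr (fun (t : Term) s => t.names ∪ s) ∅) := by
  induction ts with
  | nil => simp
  | cons t ts ih =>
      simp only [List.map_cons, List.foldr_cons]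
      intro x hx
      simp only [Finset.mem_union] at hx
      simp only [Finset.mem_insert, Finset.mem_union]
      rcases hx with hx | hx
      · have := Term.names_subst_ren1_subset t hx
        simp only [Finset.mem_insert] at this; tauto
      · have := ih hx
        simp only [Finset.mem_insert] at this; tauto

lemma optNames_map_ren1_subset (c : Option Term) :
    optNames (c.map (Term.subst (ren1 a b))) ⊆ insert b (optNames c) := by
  cases c with
  | none => simp [optNames]
  | some t => exact (Term.names_subst_ren1_subset t).trans (by simp [optNames])

lemma patsFrees_map_ren1_subset (ps : List Pat) :
    (ps.map (Pat.subst (ren1 a b))).foldr (fun (p : Pat) s => p.frees ∪ s) ∅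
      ⊆ insert b (ps.foldr (fun (p : Pat) s => p.frees ∪ s) ∅) := by
  induction ps with
  | nil => simp
  | cons p ps ih =>
      simp only [List.map_cons, List.foldr_cons]
      intro x hx
      simp only [Finset.mem_union] at hx
      simp only [Finset.mem_insert, Finset.mem_union]
      rcases hx with hx | hx
      · have := Pat.frees_subst_ren1_subset p hx
        simp only [Finset.mem_insert] at this; tauto
      · have := ih hx
        simp only [Finset.mem_insert] at this; tauto

lemma joinFrees_map_ren1_subset (J : List (Option Term × List Pat)) :
    joinFrees (J.map fun j => (j.1.map (Term.subst (ren1 a b)),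
        j.2.map (Pat.subst (ren1 a b))))
      ⊆ insert b (joinFrees J) := by
  induction J with
  | nil => simp [joinFrees]
  | cons j J ih =>
      simp only [List.map_cons, joinFrees, List.foldr_cons] at *
      intro x hx
      simp only [Finset.mem_union] at hx
      simp only [Finset.mem_insert, Finset.mem_union]
      rcases hx with (hx | hx) | hx
      · have := optNames_map_ren1_subset j.1 hx
        simp only [Finset.mem_insert] at this; tauto
      · have := patsFrees_map_ren1_subset j.2 hx
        simp only [Finset.mem_insert] at this; tauto
      · have := ih hx
        simp only [Finset.mem_insert] at this; tauto

lemma anames_subst_ren1_subset (P : Proc) :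
    (P.subst (ren1 a b)).anames ⊆ insert b P.anames := by
  induction P with
  | nil => simp [Proc.subst, Proc.anames]
  | out ch ts P ih =>
      simp only [Proc.subst, Proc.anames]
      intro x hx
      simp only [Finset.mem_union] at hx
      simp only [Finset.mem_insert, Finset.mem_union]
      rcases hx with (hx | hx) | hx
      · have := optNames_map_ren1_subset ch hx
        simp only [Finset.mem_insert] at this; tauto
      · have := tsNames_map_ren1_subset ts hx
        simp only [Finset.mem_insert] at this; tauto
      · have := ih hx
        simp only [Finset.mem_insert] at this; tauto
  | inp J P ih =>
      simp only [Proc.subst, Proc.anames]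
      intro x hx
      simp only [Finset.mem_union] at hx
      simp only [Finset.mem_insert, Finset.mem_union]
      rcases hx with (hx | hx) | hx
      · have := joinFrees_map_ren1_subset J hx
        simp only [Finset.mem_insert] at this; tauto
      · rw [joinBinds_map_subst] at hx; tauto
      · by_cases hmem : a ∈ joinBinds J
        · rw [shadow_ren1_mem hmem, Proc.subst_id] at hx; tauto
        · rw [shadow_ren1_not_mem hmem] at hx
          have := ih hx
          simp only [Finset.mem_insert] at this; tauto
  | res a' P ih =>
      simp only [Proc.subst, Proc.anames]
      intro x hx
      simp only [Finset.mem_insert] at hx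
      simp only [Finset.mem_insert]
      rcases hx with hx | hx
      · tauto
      · by_cases hmem : a ∈ [a']
        · rw [shadow_ren1_mem hmem, Proc.subst_id] at hx; tauto
        · rw [shadow_ren1_not_mem hmem] at hx
          have := ih hx
          simp only [Finset.mem_insert] at this; tauto
  | par P Q ihP ihQ =>
      simp only [Proc.subst, Proc.anames]
      intro x hx
      simp only [Finset.mem_union] at hx
      simp only [Finset.mem_insert, Finset.mem_union]
      rcases hx with hx | hx
      · have := ihP hx; simp only [Finset.mem_insert] at this; tauto
      · have := ihQ hx; simp only [Finset.mem_insert] at this; tauto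
  | ite s t P Q ihP ihQ =>
      simp only [Proc.subst, Proc.anames]
      intro x hx
      simp only [Finset.mem_union] at hx
      simp only [Finset.mem_insert, Finset.mem_union]
      rcases hx with ((hx | hx) | hx) | hx
      · have := Term.names_subst_ren1_subset s hx
        simp only [Finset.mem_insert] at this; tauto
      · have := Term.names_subst_ren1_subset t hx
        simp only [Finset.mem_insert] at this; tauto
      · have := ihP hx; simp only [Finset.mem_insert] at this; tauto
      · have := ihQ hx; simp only [Finset.mem_insert] at this; tauto
  | repl P ih => exact ih
  | succ => simp [Proc.subst, Proc.anames]

end AnamesSubst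

section ResChain

lemma outC_resChain (ns : List ℕ) (g : ℕ → Name) (P0 : Proc) (h : outC P0 = 0) :
    outC (ns.foldr (fun j R => Proc.res (g j) R) P0) = 0 := by
  induction ns with
  | nil => exact h
  | cons j ns ih => simpa [outC] using ih

lemma Safe_resChain (ns : List ℕ) (g : ℕ → Name) (P0 : Proc) (hs : Safe P0)
    (h : outC P0 = 0) :
    Safe (ns.foldr (fun j R => Proc.res (g j) R) P0) := by
  induction ns with
  | nil => exact hs
  | cons j ns ih =>
      refine ⟨ih, ?_⟩
      rw [outC_resChain ns g P0 h]
      simp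

lemma inpC_resChain (ns : List ℕ) (g : ℕ → Name) (J1 : List (Option Term × List Pat))
    (K : Proc) (h : ∀ j ∈ ns, g j ∉ lNames (J1.map Prod.fst)) :
    inpC (ns.foldr (fun j R => Proc.res (g j) R) (Proc.inp J1 K))
      = {J1.map Prod.fst} := by
  induction ns with
  | nil => rfl
  | cons j ns ih =>
      show inpC (Proc.res (g j) _) = _
      rw [show inpC (Proc.res (g j) (ns.foldr (fun j R => Proc.res (g j) R) (Proc.inp J1 K)))
          = {l | l ∈ inpC (ns.foldr (fun j R => Proc.res (g j) R) (Proc.inp J1 K))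
              ∧ g j ∉ lNames l} from rfl,
        ih (fun j' hj' => h j' (by simp [hj']))]
      ext l
      simp only [Set.mem_setOf_eq, Set.mem_singleton_iff]
      constructor
      · rintro ⟨rfl, -⟩; rfl
      · rintro rfl; exact ⟨rfl, h j (by simp)⟩

lemma not_mem_of_gt_sup {s : Finset Name} {x : Name} (h : s.sup id < x) : x ∉ s := by
  intro hx
  have hle : x ≤ s.sup id := Finset.le_sup (f := id) hx
  exact absurd h (not_lt.mpr hle)

end ResChain


section Positive

lemma matchPat_bind (t : Term) (x : Name) : matchPat t (Pat.bind x) = some [(x, t)] := by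
  cases t <;> rfl

/-- The source redex: a singleton join against a matching output reduces. -/
lemma reduces_src_pos (ch : Option Term) (x : Name) (t : Term) (R S : Proc) :
    Reduces (.par (.inp [(ch, [Pat.bind x])] R) (.out ch [t] S)) := by
  have hm : joinMatch ([((ch, ([t], S)) : Option Term × List Term × Proc)].map
      fun o => (o.1, o.2.1)) [(ch, [Pat.bind x])] = some [(x, t)] := by
    simp [joinMatch, polyMatch, matchPat_bind]
  have hred := Red.interact [(ch, ([t], S))] [(ch, [Pat.bind x])] R [(x, t)]
    (by simp) hm
  have hcong : Congr (.par (.inp [(ch, [Pat.bind x])] R) (.out ch [t] S))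
      (.par (parList ([((ch, ([t], S)) : Option Term × List Term × Proc)].map
        fun o => Proc.out o.1 o.2.1 o.2.2)) (.inp [(ch, [Pat.bind x])] R)) := by
    refine (Congr.par_comm _ _).trans ?_
    exact Congr.ctx_par (Congr.symm (Congr.par_nil _)) (Congr.refl _)
  exact ⟨_, Red.struct hcong hred (Congr.refl _)⟩

/-- The target redex: the translations of a matching singleton join and output reduce. -/
lemma reduces_trans_pos (ch : Option Term) (x : Name) (t : Term) (R S : Proc) :
    Reduces (.par (trans (.inp [(ch, [Pat.bind x])] R)) (trans (.out ch [t] S))) := by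
  set base : Name := (Proc.inp [(ch, [Pat.bind x])] R).anames.sup id + 1 with hbase
  set z : Name := (Proc.out ch [t] S).anames.sup id + 1 with hz
  set K : Proc := .par (.par (.out (some (.name (base + 0))) [.name (base + 1 + 0)] .nil) .nil)
      (.inp [(some (.name (base + 1 + 0)), [Pat.bind x])] (trans R)) with hK
  set A : Proc := .inp [(ch, [Pat.bind (base + 0)])] K with hA
  set Cin : Proc := .inp [(some (.name z), [Pat.bind (z + 1)])]
      (.par (.out (some (.name (z + 1))) [t] .nil) (trans S)) with hCin
  set B : Proc := .par (.out ch [.name z] .nil) Cin with hB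
  have htP : trans (.inp [(ch, [Pat.bind x])] R) = .res (base + 1 + 0) A := rfl
  have htQ : trans (.out ch [t] S) = .res z B := rfl
  set x0 : Name := base + 1 + 0 with hx0
  set U : Name := ((Proc.res x0 A).anames ∪ (Proc.res z B).anames).sup id with hU
  set w : Name := U + 1 with hw
  set w2 : Name := U + 2 with hw2
  have hnw : w ∉ (Proc.res x0 A).anames ∪ (Proc.res z B).anames :=
    not_mem_of_gt_sup (by rw [hw]; exact Nat.lt_succ_self U)
  have hnw2 : w2 ∉ (Proc.res x0 A).anames ∪ (Proc.res z B).anames :=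
    not_mem_of_gt_sup (by rw [hw2]; exact Nat.lt_succ_of_lt (Nat.lt_succ_self U))
  have hwB : w ∉ B.anames := fun hm =>
    hnw (Finset.mem_union_right _ (Finset.mem_insert_of_mem hm))
  have hw2A : w2 ∉ A.anames := fun hm =>
    hnw2 (Finset.mem_union_left _ (Finset.mem_insert_of_mem hm))
  have hwA : w ∉ A.anames := fun hm =>
    hnw (Finset.mem_union_left _ (Finset.mem_insert_of_mem hm))
  have hw2B : w2 ∉ B.anames := fun hm =>
    hnw2 (Finset.mem_union_right _ (Finset.mem_insert_of_mem hm))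
  -- the channel does not mention the fresh/translated names
  have hchP : optNames ch ⊆ (Proc.inp [(ch, [Pat.bind x])] R).anames := by
    intro m hm
    simp only [Proc.anames, joinFrees, List.foldr_cons, List.foldr_nil, Pat.frees,
      Finset.mem_union]
    exact Or.inl (Or.inl (by simp [hm]))
  have hchQ : optNames ch ⊆ (Proc.out ch [t] S).anames := by
    intro m hm
    simp only [Proc.anames, Finset.mem_union]
    exact Or.inl (Or.inl hm)
  have hx0ch : x0 ∉ optNames ch := fun hm => by
    have hle : x0 ≤ (Proc.inp [(ch, [Pat.bind x])] R).anames.sup id :=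
      Finset.le_sup (f := id) (hchP hm)
    have hgt : (Proc.inp [(ch, [Pat.bind x])] R).anames.sup id < x0 := by
      rw [hx0, hbase]
      exact Nat.lt_succ_of_lt (Nat.lt_succ_self _)
    exact absurd hgt (not_lt.mpr hle)
  have hzch : z ∉ optNames ch := fun hm => by
    have hle : z ≤ (Proc.out ch [t] S).anames.sup id :=
      Finset.le_sup (f := id) (hchQ hm)
    have hgt : (Proc.out ch [t] S).anames.sup id < z := by
      rw [hz]; exact Nat.lt_succ_self _
    exact absurd hgt (not_lt.mpr hle)
  -- the renamed bodies
  have hAw : Proc.subst (ren1 x0 w2) A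
      = .inp [(ch, [Pat.bind (base + 0)])]
          (Proc.subst (shadow (ren1 x0 w2) (joinBinds [(ch, [Pat.bind (base + 0)])])) K) := by
    rw [hA]
    show Proc.inp _ _ = _
    rw [show [((ch, [Pat.bind (base + 0)]) : Option Term × List Pat)].map
        (fun j => (j.1.map (Term.subst (ren1 x0 w2)), j.2.map (Pat.subst (ren1 x0 w2))))
        = [(ch.map (Term.subst (ren1 x0 w2)), [Pat.bind (base + 0)])] from rfl,
      optNames_map_ren1_of_not_mem hx0ch]
  have hBw : Proc.subst (ren1 z w) B
      = .par (.out ch [.name w] .nil) (Proc.subst (ren1 z w) Cin) := by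
    rw [hB]
    show Proc.par (.out (ch.map (Term.subst (ren1 z w)))
        ([Term.name z].map (Term.subst (ren1 z w))) .nil) _ = _
    rw [optNames_map_ren1_of_not_mem hzch,
      show [Term.name z].map (Term.subst (ren1 z w)) = [Term.name w] by
        simp [Term.subst, ren1]]
  set K' : Proc :=
    Proc.subst (shadow (ren1 x0 w2) (joinBinds [(ch, [Pat.bind (base + 0)])])) K with hK'
  set Cw : Proc := Proc.subst (ren1 z w) Cin with hCw
  set A' : Proc := Proc.inp [(ch, [Pat.bind (base + 0)])] K' with hA'
  set B' : Proc := Proc.par (.out ch [.name w] .nil) Cw with hB'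
  set O : Proc := Proc.out ch [Term.name w] .nil with hO
  -- anames bounds for the renamed bodies
  have hanA' : A'.anames ⊆ insert w2 A.anames := by
    have h := anames_subst_ren1_subset (a := x0) (b := w2) A
    rwa [hAw] at h
  have hanB' : B'.anames ⊆ insert w B.anames := by
    have h := anames_subst_ren1_subset (a := z) (b := w) B
    rwa [hBw] at h
  -- scope extrusion side conditions
  have hfw : w ∉ (Proc.res w2 A').fnames := by
    intro hm
    have hm' := fnames_subset_anames _ hm
    simp only [Proc.anames, Finset.mem_insert] at hm'
    rcases hm' with hm' | hm'
    · rw [hw, hw2] at hm'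
      have := Nat.add_left_cancel hm'
      exact absurd this (by decide)
    · rcases Finset.mem_insert.mp (hanA' hm') with hm'' | hm''
      · rw [hw, hw2] at hm''
        have := Nat.add_left_cancel hm''
        exact absurd this (by decide)
      · exact hwA hm''
  have hfw2 : w2 ∉ B'.fnames := by
    intro hm
    have hm' := fnames_subset_anames _ (hB' ▸ hm)
    rcases Finset.mem_insert.mp (hanB' hm') with hm'' | hm''
    · rw [hw, hw2] at hm''
      have := Nat.add_left_cancel hm''
      exact absurd this (by decide)
    · exact hw2B hm''
  -- the congruence chain
  have c1 : Congr (Proc.res z B) (Proc.res w B') := by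
    have h := Congr.alpha_res (a := z) (b := w) hwB
    rwa [hBw] at h
  have c2 : Congr (Proc.res x0 A) (Proc.res w2 A') := by
    have h := Congr.alpha_res (a := x0) (b := w2) hw2A
    rwa [hAw] at h
  have c3 : Congr (.par (Proc.res x0 A) (Proc.res z B)) (.par (Proc.res w2 A') (Proc.res w B')) :=
    Congr.ctx_par c2 c1
  have c4 : Congr (.par (Proc.res w2 A') (Proc.res w B'))
      (Proc.res w (.par (Proc.res w2 A') B')) := Congr.res_par hfw
  have cc : Congr (.par (Proc.res w2 A') B') (Proc.res w2 (.par B' A')) :=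
    (Congr.par_comm _ _).trans (Congr.res_par hfw2)
  have c7 : Congr (.par B' A') (.par (.par (.par O .nil) A') Cw) := by
    rw [hB']
    refine (Congr.par_comm _ _).trans ((Congr.par_assoc _ _ _).trans ?_)
    exact Congr.ctx_par ((Congr.par_comm _ _).trans
      (Congr.ctx_par (Congr.symm (Congr.par_nil _)) (Congr.refl _))) (Congr.refl _)
  have total : Congr (.par (Proc.res x0 A) (Proc.res z B))
      (Proc.res w (Proc.res w2 (.par (.par (.par O .nil) A') Cw))) :=
    c3.trans (c4.trans ((Congr.ctx_res cc).trans (Congr.ctx_res (Congr.ctx_res c7))))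
  -- the reduction
  have hm : joinMatch ([((ch, ([Term.name w], Proc.nil)) : Option Term × List Term × Proc)].map
      fun o => (o.1, o.2.1)) [(ch, [Pat.bind (base + 0)])] = some [(base + 0, Term.name w)] := by
    simp [joinMatch, polyMatch, matchPat_bind]
  have hred := Red.interact [(ch, ([Term.name w], Proc.nil))] [(ch, [Pat.bind (base + 0)])]
    K' [(base + 0, Term.name w)] (by simp) hm
  rw [htP, htQ]
  exact ⟨_, Red.struct total (Red.ctx_res (Red.ctx_res (Red.ctx_par hred))) (Congr.refl _)⟩

end Positive

/-- Lemma 5.1: for any `L_{S,M,C,NO,J}` input `P` and output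
`Q`, the translation satisfies: `[[P]] | [[Q]]` has a reduction iff `P | Q`
has a reduction. -/
theorem trans_reduces_iff (P Q : Proc) (hP : P.WF LSMCNOJ) (hQ : Q.WF LSMCNOJ)
    (hPin : P.IsInput) (hQout : Q.IsOutput) :
    Reduces (.par (trans P) (trans Q)) ↔ Reduces (.par P Q) := by
  obtain ⟨J, R, rfl⟩ := hPin
  obtain ⟨ch, ts, S, rfl⟩ := hQout
  obtain ⟨hlen, hjs, hnodup, hR⟩ := hP
  obtain ⟨hchan, harity, hdata, hsync, hSwf⟩ := hQ
  have hlen1 : 1 ≤ J.length := hlen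
  have har : ts.length = 1 := harity
  have hchname : ∃ n, ch = some (Term.name n) := by
    cases ch with
    | none =>
        have hD : Features.medium LSMCNOJ = Medium.D := hchan
        exact absurd hD (by decide)
    | some c =>
        obtain ⟨-, hc⟩ := hchan
        rcases hc with hc | hc
        · have hI : Features.pm LSMCNOJ = PM.I := hc
          exact absurd hI (by decide)
        · cases c with
          | name m => exact ⟨m, rfl⟩
          | comp s u => exact ((hc : False)).elim
  by_cases hC : J.map Prod.fst = [ch]
  · -- the channels match: both sides reduce
    obtain ⟨⟨c0, ps0⟩, rfl⟩ : ∃ j0, J = [j0] := by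
      cases J with
      | nil => simp at hC
      | cons j0 J' =>
          cases J' with
          | nil => exact ⟨j0, rfl⟩
          | cons j1 J'' => simp at hC
    have hc0 : c0 = ch := by simpa using hC
    subst hc0
    obtain ⟨-, ha0, hp0⟩ := hjs (c0, ps0) (by simp)
    have ha0' : ps0.length = 1 := ha0
    obtain ⟨p, hp⟩ := List.length_eq_one_iff.mp ha0'
    subst hp
    obtain ⟨x, rfl⟩ : ∃ x, p = Pat.bind x := by
      cases p with
      | bind x => exact ⟨x, rfl⟩
      | nmatch a => exact ((hp0 (Pat.nmatch a) (by simp) : False)).elim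
      | comp p q => exact ((hp0 (Pat.comp p q) (by simp) : False)).elim
    obtain ⟨t, rfl⟩ := List.length_eq_one_iff.mp har
    exact iff_of_true (reduces_trans_pos c0 x t R S) (reduces_src_pos c0 x t R S)
  · -- the channels do not match: neither side reduces
    obtain ⟨n, rfl⟩ := hchname
    -- common fact: the join channel list is not below the single output channel
    have hnle : ¬ ((J.map Prod.fst : Multiset (Option Term))
        ≤ ({some (Term.name n)} : Multiset (Option Term))) := by
      intro hle
      rcases Multiset.le_singleton.mp hle with h0 | h1
      · have h0' : J.map Prod.fst = [] := (Multiset.coe_eq_zero _).mp h0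
        have : J = [] := by
          cases J with
          | nil => rfl
          | cons j J' => simp at h0'
        rw [this] at hlen1
        simp at hlen1
      · have h1' : J.map Prod.fst = [some (Term.name n)] := by
          have : (J.map Prod.fst : Multiset (Option Term))
              = (([some (Term.name n)] : List (Option Term)) : Multiset (Option Term)) := by
            rw [h1]; rfl
          exact List.perm_singleton.mp (Multiset.coe_eq_coe.mp this)
        exact hC h1'
    -- abstractions of the translated output
    set zq : Name := (Proc.out (some (Term.name n)) ts S).anames.sup id + 1 with hzq
    set Cin : Proc := Proc.inp [(some (.name zq), [Pat.bind (zq + 1)])]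
        (.par (.out (some (.name (zq + 1))) ts .nil) (trans S)) with hCin
    have htQ : trans (.out (some (Term.name n)) ts S)
        = .res zq (.par (.out (some (Term.name n)) [.name zq] .nil) Cin) := rfl
    have hnz : n ≠ zq := by
      intro he
      have hmem : n ∈ (Proc.out (some (Term.name n)) ts S).anames := by
        simp only [Proc.anames, Finset.mem_union]
        exact Or.inl (Or.inl (by simp [optNames, Term.names]))
      have hle : n ≤ (Proc.out (some (Term.name n)) ts S).anames.sup id :=
        Finset.le_sup (f := id) hmem
      have hgt : (Proc.out (some (Term.name n)) ts S).anames.sup id < zq := by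
        rw [hzq]; exact Nat.lt_succ_self _
      rw [← he] at hgt
      exact absurd hle (not_le.mpr hgt)
    have hSafeQ : Safe (trans (.out (some (Term.name n)) ts S)) := by
      rw [htQ]
      refine ⟨⟨⟨n, rfl⟩, trivial⟩, ?_⟩
      intro c hc
      have hc' : c = some (Term.name n) := by
        simpa [outC] using hc
      subst hc'
      simp only [optNames, Term.names, Finset.mem_singleton]
      exact fun he => hnz he.symm
    have houtQ : outC (trans (.out (some (Term.name n)) ts S))
        = {some (Term.name n)} := by
      rw [htQ]; simp [outC]
    have hinpQ : inpC (trans (.out (some (Term.name n)) ts S)) = ∅ := by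
      rw [htQ]
      ext l
      simp only [inpC, Set.mem_setOf_eq, Set.mem_union, Set.mem_empty_iff_false,
        Set.mem_singleton_iff, iff_false, not_and]
      rintro (h | rfl)
      · exact absurd h (by simp [inpC])
      · intro hz
        exact hz (mem_lNames.mpr ⟨some (Term.name zq), by simp,
          by simp [optNames, Term.names]⟩)
    -- abstractions of the translated input
    set b0 : Name := (Proc.inp J R).anames.sup id + 1 with hb0
    set i : ℕ := J.length with hi
    set J1 : List (Option Term × List Pat) :=
      ((List.range i).zip J).map fun jc => (jc.2.1, [Pat.bind (b0 + jc.1)]) with hJ1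
    set K2 : Proc := .par
        (parList ((List.range i).map fun j =>
          .out (some (.name (b0 + j))) [.name (b0 + i + j)] .nil))
        (.inp (((List.range i).zip J).map fun jc =>
            (some (.name (b0 + i + jc.1)), jc.2.2)) (trans R)) with hK2
    have htP : trans (.inp J R)
        = (List.range i).foldr (fun j R' => .res (b0 + i + j) R') (.inp J1 K2) := rfl
    have hJ1fst : J1.map Prod.fst = J.map Prod.fst := by
      rw [hJ1, List.map_map]
      rw [show (Prod.fst ∘ fun jc : ℕ × Option Term × List Pat =>
          ((jc.2.1 : Option Term), [Pat.bind (b0 + jc.1)])) = Prod.fst ∘ Prod.snd from rfl]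
      rw [show List.map (Prod.fst ∘ Prod.snd) ((List.range i).zip J)
          = List.map Prod.fst (List.map Prod.snd ((List.range i).zip J)) from
        List.map_map.symm]
      rw [List.map_snd_zip (by simp [hi])]
    have hJnames : lNames (J.map Prod.fst) ⊆ (Proc.inp J R).anames :=
      (lNames_map_fst_subset_joinFrees J).trans
        (Finset.subset_union_left.trans Finset.subset_union_left)
    have hfresh : ∀ j ∈ List.range i, b0 + i + j ∉ lNames (J1.map Prod.fst) := by
      intro j hj hmem
      rw [hJ1fst] at hmem
      have hle : b0 + i + j ≤ (Proc.inp J R).anames.sup id :=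
        Finset.le_sup (f := id) (hJnames hmem)
      have hge : (Proc.inp J R).anames.sup id < b0 + i + j := by
        rw [hb0]
        calc (Proc.inp J R).anames.sup id
            < (Proc.inp J R).anames.sup id + 1 := Nat.lt_succ_self _
          _ ≤ (Proc.inp J R).anames.sup id + 1 + i + j := by
              exact le_trans (Nat.le_add_right _ i) (Nat.le_add_right _ j)
      exact absurd hle (not_le.mpr hge)
    have houtP : outC (trans (.inp J R)) = 0 := by
      rw [htP]; exact outC_resChain _ _ _ rfl
    have hSafeP : Safe (trans (.inp J R)) := by
      rw [htP]; exact Safe_resChain _ _ _ trivial rfl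
    have hinpP : inpC (trans (.inp J R)) = {J.map Prod.fst} := by
      rw [htP, inpC_resChain _ _ _ _ hfresh, hJ1fst]
    -- abstractions of the source processes
    have hSafeSrc : Safe (Proc.par (Proc.inp J R) (Proc.out (some (Term.name n)) ts S)) :=
      by exact ⟨trivial, ⟨n, rfl⟩⟩
    apply iff_of_false
    · -- the translated pair has no reduction
      refine not_reduces ?_ ?_
      · exact ⟨hSafeP, hSafeQ⟩
      intro l hl hle
      have hl' : l = J.map Prod.fst := by
        rcases hl with hl | hl
        · rw [hinpP] at hl; exact hl
        · rw [hinpQ] at hl; exact hl.elim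
      subst hl'
      rw [show outC (Proc.par (trans (.inp J R)) (trans (.out (some (Term.name n)) ts S)))
          = outC (trans (.inp J R)) + outC (trans (.out (some (Term.name n)) ts S)) from rfl,
        houtP, houtQ, zero_add] at hle
      exact hnle hle
    · -- the source pair has no reduction
      apply not_reduces hSafeSrc
      intro l hl hle
      have hl' : l = J.map Prod.fst := by
        rcases hl with hl | hl
        · exact hl
        · exact absurd hl (by simp [inpC])
      subst hl'
      rw [show outC (Proc.par (.inp J R) (.out (some (Term.name n)) ts S))
          = 0 + {some (Term.name n)} from rfl, zero_add] at hle
      exact hnle hle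

end Coordination
end

section
/- There exists no valid encoding from L_{A,P,D,NO,B} (asynchronous, polyadic, dataspace-based, no-matching, binary) into L_{A,M,D,NO,J} (asynchronous, monadic, dataspace-based, no-matching, joining). -/
namespace Coordination

/-! ### Auxiliary development for Statement 9 -/

namespace NoEnc

/-- A join is "monadic-binding": every pattern list is a single binding name. -/
def Jcond (J : List (Option Term × List Pat)) : Prop :=
  ∀ j ∈ J, ∃ x, j.2 = [Pat.bind x]

/-- A join is "bindless": no pattern binds any name. -/
def bindless (J : List (Option Term × List Pat)) : Prop :=
  ∀ j ∈ J, ∀ p ∈ j.2, p.binds = []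

/-- Semantic data associated to a process, stable under structural congruence. -/
structure M where
  as : Prop
  ni : ℕ∞
  no : ℕ∞
  gi : Prop
  zb : Prop
  qt : Prop

lemma M.ext' {a b : M} (h1 : a.as ↔ b.as) (h2 : a.ni = b.ni) (h3 : a.no = b.no)
    (h4 : a.gi ↔ b.gi) (h5 : a.zb ↔ b.zb) (h6 : a.qt ↔ b.qt) : a = b := by
  cases a; cases b
  dsimp at *
  rw [propext h1, propext h4, propext h5, propext h6, h2, h3]

/-- The interpretation: active-success, active-input count, active-output count,
all active inputs monadic-binding, all active inputs bindless, quiet. -/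
def mu : Proc → M
  | .nil => ⟨False, 0, 0, True, True, True⟩
  | .succ => ⟨True, 0, 0, True, True, False⟩
  | .out _ _ P => ⟨False, (mu P).ni, 1 + (mu P).no, (mu P).gi, (mu P).zb, (mu P).qt⟩
  | .inp J Q =>
      ⟨False, 1 + (mu Q).ni, (mu Q).no, Jcond J ∧ (mu Q).gi, bindless J ∧ (mu Q).zb,
        bindless J ∧ (mu Q).qt⟩
  | .res _ P => mu P
  | .par P Q =>
      ⟨(mu P).as ∨ (mu Q).as, (mu P).ni + (mu Q).ni, (mu P).no + (mu Q).no,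
        (mu P).gi ∧ (mu Q).gi, (mu P).zb ∧ (mu Q).zb, (mu P).qt ∧ (mu Q).qt⟩
  | .ite s t P Q => if s = t then mu P else mu Q
  | .repl P =>
      ⟨(mu P).as, (if (mu P).ni = 0 then 0 else ⊤), (if (mu P).no = 0 then 0 else ⊤),
        (mu P).gi, (mu P).zb, (mu P).qt⟩

end NoEnc
namespace NoEnc

/-! #### Renamings that preserve the interpretation -/

/-- A renaming `ρ` is *good* on a set `A` of names if it is injective on `A`
and maps every element of `A` either to itself or out of `A`. -/
def Good (ρ : Name → Name) (A : Finset Name) : Prop :=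
  (∀ x ∈ A, ∀ y ∈ A, ρ x = ρ y → x = y) ∧ (∀ x ∈ A, ρ x = x ∨ ρ x ∉ A)

lemma Good.mono {ρ : Name → Name} {A B : Finset Name} (h : Good ρ A) (hBA : B ⊆ A) :
    Good ρ B := by
  refine ⟨fun x hx y hy hxy => h.1 x (hBA hx) y (hBA hy) hxy, fun x hx => ?_⟩
  rcases h.2 x (hBA hx) with h' | h'
  · exact Or.inl h'
  · exact Or.inr fun hc => h' (hBA hc)

lemma Good.shadow {ρ : Name → Name} {A : Finset Name} (h : Good ρ A) (bs : List Name)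
    (hbs : ∀ b ∈ bs, b ∈ A) :
    Good (fun x => if x ∈ bs then x else ρ x) A := by
  constructor
  · intro x hx y hy hxy
    by_cases hxb : x ∈ bs <;> by_cases hyb : y ∈ bs <;> simp [hxb, hyb] at hxy
    · exact hxy
    · -- x ∈ bs, y ∉ bs, x = ρ y
      rcases h.2 y hy with h' | h'
      · rw [hxy, h']
      · exact absurd (hxy ▸ hx) h'
    · rcases h.2 x hx with h' | h'
      · rw [← hxy, h']
      · exact absurd (hxy ▸ hy) h'
    · exact h.1 x hx y hy hxy
  · intro x hx
    by_cases hxb : x ∈ bs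
    · simp [hxb]
    · simpa [hxb] using h.2 x hx

lemma term_ren_inj {σ : Sub} {ρ : Name → Name} (hσ : ∀ x, σ x = .name (ρ x))
    {s t : Term}
    (hinj : ∀ x ∈ s.names ∪ t.names, ∀ y ∈ s.names ∪ t.names, ρ x = ρ y → x = y) :
    s.subst σ = t.subst σ ↔ s = t := by
  induction s generalizing t with
  | name a =>
    cases t with
    | name b =>
      simp only [Term.subst, hσ, Term.name.injEq]
      constructor
      · intro h
        exact hinj a (by simp [Term.names]) b (by simp [Term.names]) h
      · intro h; rw [h]
    | comp t1 t2 => simp [Term.subst, hσ]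
  | comp s1 s2 ih1 ih2 =>
    cases t with
    | name b => simp [Term.subst, hσ]
    | comp t1 t2 =>
      simp only [Term.subst, Term.comp.injEq]
      rw [ih1 (fun x hx y hy => hinj x (by
            simp only [Finset.mem_union, Term.names] at hx ⊢; tauto) y (by
            simp only [Finset.mem_union, Term.names] at hy ⊢; tauto)),
          ih2 (fun x hx y hy => hinj x (by
            simp only [Finset.mem_union, Term.names] at hx ⊢; tauto) y (by
            simp only [Finset.mem_union, Term.names] at hy ⊢; tauto))]

lemma toMatchPat_binds (t : Term) : t.toMatchPat.binds = [] := by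
  induction t with
  | name a => rfl
  | comp s t ihs iht => simp [Term.toMatchPat, Pat.binds, ihs, iht]

lemma pat_subst_binds (σ : Sub) (p : Pat) : (Pat.subst σ p).binds = p.binds := by
  induction p with
  | bind x => rfl
  | nmatch a => simp [Pat.subst, Pat.binds, toMatchPat_binds]
  | comp p q ihp ihq => simp [Pat.subst, Pat.binds, ihp, ihq]

lemma pat_subst_eq_bind {σ : Sub} {ρ : Name → Name} (hσ : ∀ x, σ x = .name (ρ x))
    {p : Pat} {x : Name} (h : Pat.subst σ p = Pat.bind x) : p = Pat.bind x := by
  cases p with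
  | bind y => simpa [Pat.subst] using h
  | nmatch a => rw [Pat.subst, hσ] at h; exact absurd h (by simp [Term.toMatchPat])
  | comp p q => exact absurd h (by simp [Pat.subst])

lemma Jcond_map {σ : Sub} {ρ : Name → Name} (hσ : ∀ x, σ x = .name (ρ x))
    {J : List (Option Term × List Pat)} :
    Jcond (J.map fun j => (j.1.map (Term.subst σ), j.2.map (Pat.subst σ))) ↔ Jcond J := by
  constructor
  · intro h j hj
    obtain ⟨x, hx⟩ := h _ (List.mem_map_of_mem hj)
    simp only at hx
    rcases j with ⟨c, ps⟩
    dsimp only at hx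
    cases ps with
    | nil => simp at hx
    | cons p rest =>
      simp only [List.map_cons, List.cons.injEq, List.map_eq_nil_iff] at hx
      obtain ⟨h1, h2⟩ := hx
      exact ⟨x, by simp [pat_subst_eq_bind hσ h1, h2]⟩
  · rintro h j hj
    obtain ⟨j', hj', rfl⟩ := List.mem_map.mp hj
    obtain ⟨x, hx⟩ := h j' hj'
    exact ⟨x, by simp [hx, Pat.subst]⟩

lemma bindless_map {σ : Sub} {J : List (Option Term × List Pat)} :
    bindless (J.map fun j => (j.1.map (Term.subst σ), j.2.map (Pat.subst σ))) ↔
      bindless J := by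
  constructor
  · intro h j hj p hp
    have := h _ (List.mem_map_of_mem hj) (Pat.subst σ p) (by
      simpa using List.mem_map_of_mem hp)
    rwa [pat_subst_binds] at this
  · intro h j hj p hp
    obtain ⟨j', hj', rfl⟩ := List.mem_map.mp hj
    simp only [List.mem_map] at hp
    obtain ⟨p', hp', rfl⟩ := hp
    rw [pat_subst_binds]
    exact h j' hj' p' hp'

end NoEnc
namespace NoEnc

lemma anames_out_sub {ch ts P} : P.anames ⊆ (Proc.out ch ts P).anames := by
  intro x hx; simp only [Proc.anames, Finset.mem_union]; tauto

lemma anames_inp_sub {J P} : P.anames ⊆ (Proc.inp J P).anames := by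
  intro x hx; simp only [Proc.anames, Finset.mem_union]; tauto

lemma anames_res_sub {a P} : P.anames ⊆ (Proc.res a P).anames := by
  intro x hx; simp only [Proc.anames, Finset.mem_insert]; tauto

lemma anames_par_left {P Q} : P.anames ⊆ (Proc.par P Q).anames := by
  intro x hx; simp only [Proc.anames, Finset.mem_union]; tauto

lemma anames_par_right {P Q} : Q.anames ⊆ (Proc.par P Q).anames := by
  intro x hx; simp only [Proc.anames, Finset.mem_union]; tauto

lemma anames_ite_P {s t P Q} : P.anames ⊆ (Proc.ite s t P Q).anames := by
  intro x hx; simp only [Proc.anames, Finset.mem_union]; tauto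

lemma anames_ite_Q {s t P Q} : Q.anames ⊆ (Proc.ite s t P Q).anames := by
  intro x hx; simp only [Proc.anames, Finset.mem_union]; tauto

lemma anames_ite_st {s t : Term} {P Q} :
    s.names ∪ t.names ⊆ (Proc.ite s t P Q).anames := by
  intro x hx
  simp only [Finset.mem_union] at hx
  simp only [Proc.anames, Finset.mem_union]; tauto

lemma anames_repl_sub {P} : P.anames ⊆ (Proc.repl P).anames := by
  intro x hx; simpa only [Proc.anames] using hx

lemma anames_binds_inp {J P} : ∀ b ∈ joinBinds J, b ∈ (Proc.inp J P).anames := by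
  intro b hb
  simp only [Proc.anames, Finset.mem_union, List.mem_toFinset]
  tauto

lemma mu_subst (P : Proc) : ∀ (σ : Sub) (ρ : Name → Name),
    (∀ x, σ x = .name (ρ x)) → Good ρ P.anames → mu (P.subst σ) = mu P := by
  induction P with
  | nil => intros; rfl
  | succ => intros; rfl
  | out ch ts P ih =>
    intro σ ρ hσ hG
    simp only [Proc.subst, mu]
    rw [ih σ ρ hσ (hG.mono anames_out_sub)]
  | inp J Q ih =>
    intro σ ρ hσ hG
    simp only [Proc.subst, mu]
    have hσ' : ∀ x, shadow σ (joinBinds J) x =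
        Term.name (if x ∈ joinBinds J then x else ρ x) := by
      intro x
      simp only [shadow]
      split <;> simp_all [hσ]
    have hG' : Good (fun x => if x ∈ joinBinds J then x else ρ x) Q.anames :=
      (hG.shadow (joinBinds J) (fun b hb => anames_binds_inp b hb)).mono anames_inp_sub
    rw [ih _ _ hσ' hG']
    refine M.ext' (Iff.rfl) rfl rfl ?_ ?_ ?_
    · rw [Jcond_map hσ]
    · rw [bindless_map]
    · rw [bindless_map]
  | res a P ih =>
    intro σ ρ hσ hG
    simp only [Proc.subst, mu]
    have hσ' : ∀ x, shadow σ [a] x =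
        Term.name (if x ∈ [a] then x else ρ x) := by
      intro x
      simp only [shadow]
      split <;> simp_all [hσ]
    exact ih _ _ hσ' ((hG.shadow [a] (by
      intro b hb
      simp only [List.mem_singleton] at hb
      subst hb
      simp [Proc.anames])).mono anames_res_sub)
  | par P Q ihP ihQ =>
    intro σ ρ hσ hG
    simp only [Proc.subst, mu]
    rw [ihP σ ρ hσ (hG.mono anames_par_left), ihQ σ ρ hσ (hG.mono anames_par_right)]
  | ite s t P Q ihP ihQ =>
    intro σ ρ hσ hG
    simp only [Proc.subst, mu]
    have hst : s.subst σ = t.subst σ ↔ s = t := by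
      refine term_ren_inj hσ ?_
      intro x hx y hy h
      exact hG.1 x (anames_ite_st hx) y (anames_ite_st hy) h
    by_cases h : s = t
    · rw [if_pos (hst.mpr h), if_pos h]
      exact ihP σ ρ hσ (hG.mono anames_ite_P)
    · rw [if_neg (fun hc => h (hst.mp hc)), if_neg h]
      exact ihQ σ ρ hσ (hG.mono anames_ite_Q)
  | repl P ih =>
    intro σ ρ hσ hG
    simp only [Proc.subst, mu]
    rw [ih σ ρ hσ (hG.mono anames_repl_sub)]

lemma ren1_eq (a b : Name) : ∀ x, ren1 a b x = .name (if x = a then b else x) := by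
  intro x; simp only [ren1]; split <;> rfl

lemma good_ren1 {a b : Name} {A : Finset Name} (hb : b ∉ A) :
    Good (fun x => if x = a then b else x) A := by
  constructor
  · intro x hx y hy hxy
    dsimp only at hxy
    by_cases hxa : x = a <;> by_cases hya : y = a
    · rw [hxa, hya]
    · rw [if_pos hxa, if_neg hya] at hxy
      rw [hxy] at hb
      exact absurd hy hb
    · rw [if_neg hxa, if_pos hya] at hxy
      rw [← hxy] at hb
      exact absurd hx hb
    · rwa [if_neg hxa, if_neg hya] at hxy
  · intro x hx
    dsimp only
    by_cases hxa : x = a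
    · rw [if_pos hxa]; exact Or.inr hb
    · rw [if_neg hxa]; exact Or.inl rfl

lemma binds_renameBindPat (x b : Name) (p : Pat) :
    (renameBindPat x b p).binds = p.binds.map (fun y => if y = x then b else y) := by
  induction p with
  | bind y => by_cases h : y = x <;> simp [renameBindPat, Pat.binds, h]
  | nmatch a => simp [renameBindPat, Pat.binds]
  | comp p q ihp ihq => simp [renameBindPat, Pat.binds, ihp, ihq]

lemma rename_bind_eq_bind {x b z : Name} {p : Pat} (h : renameBindPat x b p = Pat.bind z) :
    ∃ y, p = Pat.bind y := by
  cases p with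
  | bind y => exact ⟨y, rfl⟩
  | nmatch a => exact absurd h (by simp [renameBindPat])
  | comp p q => exact absurd h (by simp [renameBindPat])

lemma Jcond_rename {x b : Name} {J : List (Option Term × List Pat)} :
    Jcond (renameBindJoin x b J) ↔ Jcond J := by
  constructor
  · intro h j hj
    obtain ⟨z, hz⟩ := h _ (List.mem_map_of_mem hj)
    dsimp only [renameBindJoin] at hz
    rcases j with ⟨c, ps⟩
    cases ps with
    | nil => simp at hz
    | cons p rest =>
      simp only [List.map_cons, List.cons.injEq, List.map_eq_nil_iff] at hz
      obtain ⟨h1, h2⟩ := hz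
      obtain ⟨y, hy⟩ := rename_bind_eq_bind h1
      exact ⟨y, by simp [hy, h2]⟩
  · intro h j hj
    obtain ⟨j', hj', rfl⟩ := List.mem_map.mp hj
    obtain ⟨y, hy⟩ := h j' hj'
    by_cases hyx : y = x
    · exact ⟨b, by simp [hy, renameBindPat, hyx]⟩
    · exact ⟨y, by simp [hy, renameBindPat, hyx]⟩

lemma bindless_rename {x b : Name} {J : List (Option Term × List Pat)} :
    bindless (renameBindJoin x b J) ↔ bindless J := by
  constructor
  · intro h j hj p hp
    have := h _ (List.mem_map_of_mem hj) (renameBindPat x b p) (by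
      simpa [renameBindJoin] using List.mem_map_of_mem hp)
    rw [binds_renameBindPat] at this
    exact List.map_eq_nil_iff.mp this
  · intro h j hj p hp
    obtain ⟨j', hj', rfl⟩ := List.mem_map.mp hj
    simp only [List.mem_map] at hp
    obtain ⟨p', hp', rfl⟩ := hp
    rw [binds_renameBindPat, h j' hj' p' hp']
    rfl

/-- The interpretation is invariant under structural congruence. -/
lemma mu_congr {P Q : Proc} (h : Congr P Q) : mu P = mu Q := by
  induction h with
  | refl => rfl
  | symm _ ih => exact ih.symm
  | trans _ _ ih1 ih2 => exact ih1.trans ih2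
  | par_nil P => refine M.ext' ?_ ?_ ?_ ?_ ?_ ?_ <;> simp [mu]
  | par_comm P Q =>
    refine M.ext' ?_ ?_ ?_ ?_ ?_ ?_ <;> simp [mu, add_comm, and_comm, or_comm]
  | par_assoc P Q R =>
    refine M.ext' ?_ ?_ ?_ ?_ ?_ ?_ <;> simp [mu, add_assoc, and_assoc, or_assoc]
  | ite_eq s P Q => simp [mu]
  | ite_ne h P Q => simp [mu, h]
  | res_nil a => rfl
  | res_swap a b P => rfl
  | res_par h => rfl
  | repl_unfold P =>
    refine M.ext' ?_ ?_ ?_ ?_ ?_ ?_ <;> simp [mu]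
    · by_cases h : (mu P).ni = 0 <;> simp [h]
    · by_cases h : (mu P).no = 0 <;> simp [h]
  | alpha_res h =>
    simp only [mu]
    exact (mu_subst _ _ _ (ren1_eq _ _) (good_ren1 h)).symm
  | alpha_inp hx hb =>
    simp only [mu]
    rw [mu_subst _ _ _ (ren1_eq _ _) (good_ren1 (fun hc => hb (anames_inp_sub hc)))]
    exact M.ext' Iff.rfl rfl rfl (by rw [Jcond_rename]) (by rw [bindless_rename])
      (by rw [bindless_rename])
  | ctx_out _ ih => simp only [mu]; rw [ih]
  | ctx_inp _ ih => simp only [mu]; rw [ih]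
  | ctx_res _ ih => simp only [mu]; rw [ih]
  | ctx_par _ _ ih1 ih2 => simp only [mu]; rw [ih1, ih2]
  | ctx_ite _ _ ih1 ih2 =>
    simp only [mu]
    split <;> [exact ih1; exact ih2]
  | ctx_repl _ ih => simp only [mu]; rw [ih]

end NoEnc
namespace NoEnc

/-! #### Identity substitutions -/

lemma list_map_eq_self {α} {f : α → α} {l : List α} (h : ∀ a ∈ l, f a = a) :
    l.map f = l := by
  induction l with
  | nil => rfl
  | cons a l ih =>
    simp only [List.map_cons, h a (by simp), List.cons.injEq, true_and]
    exact ih (fun b hb => h b (by simp [hb]))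

lemma term_subst_id {σ : Sub} (t : Term) (h : ∀ x ∈ t.names, σ x = .name x) :
    t.subst σ = t := by
  induction t with
  | name a => exact h a (by simp [Term.names])
  | comp s t ihs iht =>
    simp only [Term.subst, Term.comp.injEq]
    exact ⟨ihs (fun x hx => h x (by simp [Term.names]; exact Or.inl hx)),
           iht (fun x hx => h x (by simp [Term.names]; exact Or.inr hx))⟩

lemma pat_subst_id {σ : Sub} (p : Pat) (h : ∀ x ∈ p.frees, σ x = .name x) :
    Pat.subst σ p = p := by
  induction p with
  | bind x => rfl
  | nmatch a =>
    simp only [Pat.subst]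
    rw [h a (by simp [Pat.frees])]
    rfl
  | comp p q ihp ihq =>
    simp only [Pat.subst, Pat.comp.injEq]
    exact ⟨ihp (fun x hx => h x (by simp [Pat.frees]; exact Or.inl hx)),
           ihq (fun x hx => h x (by simp [Pat.frees]; exact Or.inr hx))⟩

lemma names_sub_foldr {t : Term} {ts : List Term} (ht : t ∈ ts) :
    t.names ⊆ ts.foldr (fun t a => t.names ∪ a) ∅ := by
  induction ts with
  | nil => cases ht
  | cons u ts ih =>
    rcases List.mem_cons.mp ht with rfl | ht
    · intro x hx; simp only [List.foldr_cons, Finset.mem_union]; exact Or.inl hx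
    · intro x hx
      simp only [List.foldr_cons, Finset.mem_union]
      exact Or.inr (ih ht hx)

lemma frees_sub_foldr {p : Pat} {ps : List Pat} (hp : p ∈ ps) :
    p.frees ⊆ ps.foldr (fun p b => p.frees ∪ b) ∅ := by
  induction ps with
  | nil => cases hp
  | cons q ps ih =>
    rcases List.mem_cons.mp hp with rfl | hp
    · intro x hx; simp only [List.foldr_cons, Finset.mem_union]; exact Or.inl hx
    · intro x hx
      simp only [List.foldr_cons, Finset.mem_union]
      exact Or.inr (ih hp hx)

lemma joinFrees_super {J : List (Option Term × List Pat)} {j} (hj : j ∈ J) :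
    optNames j.1 ∪ j.2.foldr (fun p b => p.frees ∪ b) ∅ ⊆ joinFrees J := by
  induction J with
  | nil => cases hj
  | cons j' J ih =>
    rcases List.mem_cons.mp hj with rfl | hj
    · intro x hx
      simp only [Finset.mem_union] at hx
      simp only [joinFrees, List.foldr_cons, Finset.mem_union]
      tauto
    · intro x hx
      have := ih hj hx
      simp only [joinFrees, List.foldr_cons, Finset.mem_union] at this ⊢
      tauto

lemma proc_subst_id (P : Proc) : ∀ (σ : Sub), (∀ x ∈ P.fnames, σ x = .name x) →
    P.subst σ = P := by
  induction P with
  | nil => intros; rfl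
  | succ => intros; rfl
  | out ch ts P ih =>
    intro σ h
    simp only [Proc.subst, Proc.out.injEq]
    refine ⟨?_, ?_, ih σ (fun x hx => h x (by
      simp only [Proc.fnames, Finset.mem_union]; tauto))⟩
    · cases ch with
      | none => rfl
      | some c =>
        simp only [Option.map_some]
        rw [term_subst_id c (fun x hx => h x (by
          simp only [Proc.fnames, Finset.mem_union, optNames]; tauto))]
    · refine list_map_eq_self (fun t ht => ?_)
      exact term_subst_id t (fun x hx => h x (by
        simp only [Proc.fnames, Finset.mem_union]
        exact Or.inl (Or.inr (names_sub_foldr ht hx))))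
  | inp J Q ih =>
    intro σ h
    simp only [Proc.subst, Proc.inp.injEq]
    constructor
    · refine list_map_eq_self (fun j hj => ?_)
      have hch : j.1.map (Term.subst σ) = j.1 := by
        cases hc : j.1 with
        | none => rfl
        | some c =>
          simp only [Option.map_some]
          rw [term_subst_id c (fun x hx => h x (by
            simp only [Proc.fnames, Finset.mem_union]
            exact Or.inl (joinFrees_super hj (Finset.mem_union_left _ (by
              simp [hc, optNames, hx])))))]
      have hps : j.2.map (Pat.subst σ) = j.2 := by
        refine list_map_eq_self (fun p hp => ?_)
        exact pat_subst_id p (fun x hx => h x (by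
          simp only [Proc.fnames, Finset.mem_union]
          exact Or.inl (joinFrees_super hj (Finset.mem_union_right _
            (frees_sub_foldr hp hx)))))
      rw [hch, hps]
    · refine ih _ (fun x hx => ?_)
      simp only [shadow]
      by_cases hb : x ∈ joinBinds J
      · rw [if_pos hb]
      · rw [if_neg hb]
        refine h x ?_
        simp only [Proc.fnames, Finset.mem_union, Finset.mem_sdiff, List.mem_toFinset]
        exact Or.inr ⟨hx, hb⟩
  | res a P ih =>
    intro σ h
    simp only [Proc.subst, Proc.res.injEq, true_and]
    refine ih _ (fun x hx => ?_)
    simp only [shadow]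
    by_cases hb : x ∈ [a]
    · rw [if_pos hb]
    · rw [if_neg hb]
      simp only [List.mem_singleton] at hb
      exact h x (by
        simp only [Proc.fnames, Finset.mem_erase]
        exact ⟨hb, hx⟩)
  | par P Q ihP ihQ =>
    intro σ h
    simp only [Proc.subst, Proc.par.injEq]
    exact ⟨ihP σ (fun x hx => h x (by simp only [Proc.fnames, Finset.mem_union]; tauto)),
           ihQ σ (fun x hx => h x (by simp only [Proc.fnames, Finset.mem_union]; tauto))⟩
  | ite s t P Q ihP ihQ =>
    intro σ h
    simp only [Proc.subst, Proc.ite.injEq]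
    refine ⟨term_subst_id s (fun x hx => h x (by
        simp only [Proc.fnames, Finset.mem_union]; tauto)),
      term_subst_id t (fun x hx => h x (by
        simp only [Proc.fnames, Finset.mem_union]; tauto)),
      ihP σ (fun x hx => h x (by simp only [Proc.fnames, Finset.mem_union]; tauto)),
      ihQ σ (fun x hx => h x (by simp only [Proc.fnames, Finset.mem_union]; tauto))⟩
  | repl P ih =>
    intro σ h
    simp only [Proc.subst, Proc.repl.injEq]
    exact ih σ (fun x hx => h x (by simpa only [Proc.fnames] using hx))

lemma subst_toSub_nil (P : Proc) : P.subst (toSub []) = P :=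
  proc_subst_id P _ (fun x _ => rfl)

end NoEnc
namespace NoEnc

/-! #### ENat helpers -/

lemma enat_add_eq_one {a b : ℕ∞} (h : a + b = 1) :
    (a = 0 ∧ b = 1) ∨ (a = 1 ∧ b = 0) := by
  cases a with
  | top => simp [top_add] at h
  | coe m =>
    cases b with
    | top => simp [add_top] at h
    | coe n =>
      rw [← Nat.cast_add] at h
      have h1 : ((1 : ℕ) : ℕ∞) = (1 : ℕ∞) := by norm_cast
      rw [← h1, Nat.cast_inj] at h
      rcases Nat.add_eq_one_iff.mp h with ⟨rfl, rfl⟩ | ⟨rfl, rfl⟩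
      · exact Or.inl ⟨rfl, by norm_cast⟩
      · exact Or.inr ⟨by norm_cast, rfl⟩

lemma enat_one_add_eq_one {q : ℕ∞} (h : 1 + q = 1) : q = 0 := by
  rcases enat_add_eq_one h with ⟨h1, _⟩ | ⟨_, h2⟩
  · exact absurd h1 one_ne_zero
  · exact h2

/-! #### `mu` on lists of outputs -/

lemma mu_parList_ni (l : List Proc) :
    (mu (parList l)).ni = (l.map (fun P => (mu P).ni)).sum := by
  induction l with
  | nil => simp [parList, mu]
  | cons P l ih =>
    simp only [parList] at ih ⊢
    simp [mu, ih]

lemma ni_outs (outs : List (Option Term × List Term × Proc)) :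
    (mu (parList (outs.map fun o => Proc.out o.1 o.2.1 o.2.2))).ni =
      (mu (parList (outs.map fun o => o.2.2))).ni := by
  induction outs with
  | nil => rfl
  | cons o outs ih =>
    simp only [parList] at ih ⊢
    simp only [List.map_cons, List.foldr_cons, mu, ih]

lemma qt_outs (outs : List (Option Term × List Term × Proc)) :
    (mu (parList (outs.map fun o => Proc.out o.1 o.2.1 o.2.2))).qt ↔
      (mu (parList (outs.map fun o => o.2.2))).qt := by
  induction outs with
  | nil => exact Iff.rfl
  | cons o outs ih =>
    simp only [List.map_cons, parList, List.foldr_cons, mu]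
    rw [show parList (outs.map fun o => Proc.out o.1 o.2.1 o.2.2) =
      List.foldr Proc.par Proc.nil (outs.map fun o => Proc.out o.1 o.2.1 o.2.2) from rfl] at ih
    rw [show parList (outs.map fun o => o.2.2) =
      List.foldr Proc.par Proc.nil (outs.map fun o => o.2.2) from rfl] at ih
    rw [ih]

lemma no_outs_ne {outs : List (Option Term × List Term × Proc)} (hne : outs ≠ []) :
    (mu (parList (outs.map fun o => Proc.out o.1 o.2.1 o.2.2))).no ≠ 0 := by
  cases outs with
  | nil => exact absurd rfl hne
  | cons o outs =>
    simp only [List.map_cons, parList, List.foldr_cons, mu]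
    simp [add_eq_zero]

/-! #### Bindless joins produce empty match lists -/

lemma matchPat_bindless : ∀ (p : Pat) (t : Term) (m : List (Name × Term)),
    matchPat t p = some m → p.binds = [] → m = [] := by
  intro p
  induction p with
  | bind x => intro t m _ hb; simp [Pat.binds] at hb
  | nmatch b =>
    intro t m h _
    cases t with
    | name a =>
      simp only [matchPat] at h
      split at h
      · exact (Option.some.injEq _ _ ▸ h).symm ▸ rfl
      · cases h
    | comp s t => cases h
  | comp p q ihp ihq =>
    intro t m h hb
    cases t with
    | name a => cases h
    | comp s t =>
      simp only [matchPat, Option.bind_eq_bind, Option.bind_eq_some_iff] at h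
      obtain ⟨l1, h1, l2, h2, h3⟩ := h
      simp only [Pat.binds, List.append_eq_nil_iff] at hb
      rw [ihp s l1 h1 hb.1, ihq t l2 h2 hb.2] at h3
      exact (Option.some.injEq _ _ ▸ h3).symm

lemma polyMatch_bindless : ∀ (ps : List Pat) (ts : List Term) (m : List (Name × Term)),
    polyMatch ts ps = some m → (∀ p ∈ ps, p.binds = []) → m = [] := by
  intro ps
  induction ps with
  | nil =>
    intro ts m h _
    cases ts with
    | nil => simpa [polyMatch] using h.symm
    | cons t ts => cases h
  | cons p ps ih =>
    intro ts m h hb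
    cases ts with
    | nil => cases h
    | cons t ts =>
      simp only [polyMatch, Option.bind_eq_bind, Option.bind_eq_some_iff] at h
      obtain ⟨l1, h1, l2, h2, h3⟩ := h
      rw [matchPat_bindless p t l1 h1 (hb p (by simp)),
        ih ts l2 h2 (fun q hq => hb q (by simp [hq]))] at h3
      exact (Option.some.injEq _ _ ▸ h3).symm

lemma joinMatch_bindless : ∀ (J : List (Option Term × List Pat))
    (os : List (Option Term × List Term)) (l : List (Name × Term)),
    joinMatch os J = some l → bindless J → l = [] := by
  intro J
  induction J with
  | nil =>
    intro os l h _
    cases os with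
    | nil => simpa [joinMatch] using h.symm
    | cons o os => cases h
  | cons j J ih =>
    intro os l h hb
    cases os with
    | nil => cases h
    | cons o os =>
      rcases o with ⟨c, ts⟩
      rcases j with ⟨c', ps⟩
      simp only [joinMatch] at h
      split at h
      · simp only [Option.bind_eq_bind, Option.bind_eq_some_iff] at h
        obtain ⟨l1, h1, l2, h2, h3⟩ := h
        rw [polyMatch_bindless ps ts l1 h1 (fun p hp => hb (c', ps) (by simp) p hp),
          ih os l2 h2 (fun j' hj' => hb j' (by simp [hj']))] at h3
        exact (Option.some.injEq _ _ ▸ h3).symm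
      · cases h

/-! #### Reduction requires active inputs and outputs -/

lemma red_act {P P'} (h : Red P P') : (mu P).ni ≠ 0 ∧ (mu P).no ≠ 0 := by
  induction h with
  | interact outs J Q l hne hm =>
    constructor
    · simp [mu, add_eq_zero]
    · simp only [mu, ne_eq, add_eq_zero, not_and_or]
      exact Or.inl (no_outs_ne hne)
  | ctx_par _ ih =>
    simp only [mu, ne_eq, add_eq_zero, not_and_or]
    exact ⟨Or.inl ih.1, Or.inl ih.2⟩
  | ctx_res _ ih => exact ih
  | struct hc _ hc' ih => rw [mu_congr hc]; exact ih

/-- Quietness is preserved by reduction. -/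
lemma red_qt {P P'} (h : Red P P') (hq : (mu P).qt) : (mu P').qt := by
  induction h with
  | interact outs J Q l hne hm =>
    simp only [mu] at hq ⊢
    obtain ⟨h1, h2, h3⟩ := hq
    have hl : l = [] := joinMatch_bindless J _ l hm h2
    subst hl
    rw [subst_toSub_nil]
    exact ⟨(qt_outs outs).mp h1, h3⟩
  | ctx_par _ ih => exact ⟨ih hq.1, hq.2⟩
  | ctx_res _ ih => exact ih hq
  | struct hc _ hc' ih =>
    rw [mu_congr hc] at hq
    rw [← mu_congr hc']
    exact ih hq

lemma reds_qt {P Q} (h : Reds P Q) (hq : (mu P).qt) : (mu Q).qt := by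
  induction h with
  | refl => exact hq
  | tail _ hstep ih => exact red_qt hstep ih

lemma qt_not_as (P : Proc) : (mu P).qt → ¬ (mu P).as := by
  induction P with
  | nil => intro _ h; exact h
  | succ => intro h; exact absurd h (by simp [mu])
  | out ch ts P ih => intro _ h; exact h
  | inp J Q ih => intro _ h; exact h
  | res a P ih => exact ih
  | par P Q ihP ihQ =>
    intro hq h
    rcases h with h | h
    · exact ihP hq.1 h
    · exact ihQ hq.2 h
  | ite s t P Q ihP ihQ =>
    simp only [mu]
    split
    · exact ihP
    · exact ihQ
  | repl P ih => exact ih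

/-- One-shot property: a bindless process with a single active input
becomes input-free after any reduction. -/
lemma red_ni_dec {P P'} (h : Red P P') : (mu P).zb → (mu P).ni = 1 → (mu P').ni = 0 := by
  induction h with
  | interact outs J Q l hne hm =>
    intro hzb hni
    simp only [mu] at hzb hni ⊢
    have hl : l = [] := joinMatch_bindless J _ l hm hzb.2.1
    subst hl
    rw [subst_toSub_nil]
    rcases enat_add_eq_one hni with ⟨h1, h2⟩ | ⟨_, h2⟩
    · rw [ni_outs] at h1
      rw [h1, enat_one_add_eq_one h2, add_zero]
    · exact absurd h2 (by simp [add_eq_zero])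
  | ctx_par hred ih =>
    intro hzb hni
    simp only [mu] at hzb hni ⊢
    rcases enat_add_eq_one hni with ⟨h1, _⟩ | ⟨h1, h2⟩
    · exact absurd h1 (red_act hred).1
    · rw [ih hzb.1 h1, h2, add_zero]
  | ctx_res _ ih => exact ih
  | struct hc _ hc' ih =>
    intro hzb hni
    rw [mu_congr hc] at hzb hni
    rw [← mu_congr hc']
    exact ih hzb hni

end NoEnc
namespace NoEnc

/-! #### Extracting a success from an active success -/

lemma congr_pull_succ_left {P Q R : Proc} (h : Congr P (.par R .succ)) :
    Congr (.par P Q) (.par (.par R Q) .succ) :=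
  Congr.trans (Congr.ctx_par h (Congr.refl Q))
    (Congr.trans (Congr.symm (Congr.par_assoc R .succ Q))
      (Congr.trans (Congr.ctx_par (Congr.refl R) (Congr.par_comm .succ Q))
        (Congr.par_assoc R Q .succ)))

lemma congr_pull_succ_right {P Q R : Proc} (h : Congr Q (.par R .succ)) :
    Congr (.par P Q) (.par (.par P R) .succ) :=
  Congr.trans (Congr.par_comm P Q) (Congr.trans (congr_pull_succ_left h) (Congr.ctx_par
    (Congr.par_comm R P) (Congr.refl _)))

lemma as_extract (P : Proc) : (mu P).as → ∃ R, Congr P (.par R .succ) := by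
  induction P with
  | nil => intro h; exact absurd h (by simp [mu])
  | succ =>
    intro _
    exact ⟨.nil, Congr.trans (Congr.symm (Congr.par_nil .succ)) (Congr.par_comm .succ .nil)⟩
  | out ch ts P ih => intro h; exact absurd h (by simp [mu])
  | inp J Q ih => intro h; exact absurd h (by simp [mu])
  | res a P ih =>
    intro h
    obtain ⟨R, hR⟩ := ih h
    refine ⟨.res a R, ?_⟩
    have h1 : Congr (.res a P) (.res a (.par .succ R)) :=
      Congr.ctx_res (Congr.trans hR (Congr.par_comm R .succ))
    have h2 : Congr (.par Proc.succ (.res a R)) (.res a (.par .succ R)) :=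
      Congr.res_par (by simp [Proc.fnames])
    exact Congr.trans h1 (Congr.trans (Congr.symm h2) (Congr.par_comm .succ (.res a R)))
  | par P Q ihP ihQ =>
    intro h
    rcases h with h | h
    · obtain ⟨R, hR⟩ := ihP h
      exact ⟨.par R Q, congr_pull_succ_left hR⟩
    · obtain ⟨R, hR⟩ := ihQ h
      exact ⟨.par P R, congr_pull_succ_right hR⟩
  | ite s t P Q ihP ihQ =>
    intro h
    by_cases hst : s = t
    · subst hst
      simp only [mu, if_pos rfl] at h
      obtain ⟨R, hR⟩ := ihP h
      exact ⟨R, Congr.trans (Congr.ite_eq s P Q) hR⟩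
    · simp only [mu, if_neg hst] at h
      obtain ⟨R, hR⟩ := ihQ h
      exact ⟨R, Congr.trans (Congr.ite_ne hst P Q) hR⟩
  | repl P ih =>
    intro h
    obtain ⟨R, hR⟩ := ih h
    exact ⟨.par R (.repl P),
      Congr.trans (Congr.repl_unfold P) (congr_pull_succ_left hR)⟩

lemma maySucceed_of_as {P : Proc} (h : (mu P).as) : MaySucceed P := by
  obtain ⟨R, hR⟩ := as_extract P h
  exact ⟨P, R, Relation.ReflTransGen.refl, hR⟩

lemma as_of_congr_succ {P R : Proc} (h : Congr P (.par R .succ)) : (mu P).as := by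
  rw [mu_congr h]
  exact Or.inr trivial

lemma reds_eq_of_irred {P Q : Proc} (hirr : ∀ U, ¬ Red P U) (h : Reds P Q) : Q = P := by
  rcases Relation.ReflTransGen.cases_head h with rfl | ⟨c, hc, _⟩
  · rfl
  · exact absurd hc (hirr c)

lemma qt_not_maySucceed {P : Proc} (hq : (mu P).qt) : ¬ MaySucceed P := by
  rintro ⟨Q, R, hr, hc⟩
  exact qt_not_as Q (reds_qt hr hq) (as_of_congr_succ hc)

/-! #### Monotonicity of active success in contexts -/

lemma ctx_as_mono {k} (C : Ctx k) : ∀ (f g : Fin k → Proc),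
    (∀ i, (mu (f i)).as → (mu (g i)).as) →
    (mu (C.fill f)).as → (mu (C.fill g)).as := by
  induction C with
  | hole => intro f g h hx; exact h 0 hx
  | const P => intro f g h hx; exact hx
  | out ch ts C ih => intro f g h hx; simp [Ctx.fill, mu] at hx
  | inp J C ih => intro f g h hx; simp [Ctx.fill, mu] at hx
  | res a C ih =>
    intro f g h hx
    simp only [Ctx.fill, mu] at hx ⊢
    exact ih f g h hx
  | par C D ihC ihD =>
    intro f g h hx
    simp only [Ctx.fill, mu] at hx ⊢
    rcases hx with hx | hx
    · exact Or.inl (ihC _ _ (fun i => h _) hx)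
    · exact Or.inr (ihD _ _ (fun i => h _) hx)
  | ite s t C D ihC ihD =>
    intro f g h hx
    simp only [Ctx.fill, mu] at hx ⊢
    by_cases hst : s = t
    · rw [if_pos hst] at hx ⊢
      exact ihC _ _ (fun i => h _) hx
    · rw [if_neg hst] at hx ⊢
      exact ihD _ _ (fun i => h _) hx
  | repl C ih =>
    intro f g h hx
    simp only [Ctx.fill, mu] at hx ⊢
    exact ih f g h hx

lemma ctx_as_cases {k} (C : Ctx k) : ∀ (f : Fin k → Proc),
    (mu (C.fill f)).as →
    (mu (C.fill (fun _ => Proc.nil))).as ∨ ∃ i, (mu (f i)).as := by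
  induction C with
  | hole => intro f h; exact Or.inr ⟨0, h⟩
  | const P => intro f h; exact Or.inl h
  | out ch ts C ih => intro f h; simp [Ctx.fill, mu] at h
  | inp J C ih => intro f h; simp [Ctx.fill, mu] at h
  | res a C ih =>
    intro f h
    simp only [Ctx.fill, mu] at h ⊢
    exact ih f h
  | par C D ihC ihD =>
    intro f h
    simp only [Ctx.fill, mu] at h ⊢
    rcases h with h | h
    · rcases ihC _ h with h' | ⟨i, hi⟩
      · exact Or.inl (Or.inl h')
      · exact Or.inr ⟨Fin.castAdd _ i, hi⟩
    · rcases ihD _ h with h' | ⟨i, hi⟩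
      · exact Or.inl (Or.inr h')
      · exact Or.inr ⟨Fin.natAdd _ i, hi⟩
  | ite s t C D ihC ihD =>
    intro f h
    simp only [Ctx.fill, mu] at h ⊢
    by_cases hst : s = t
    · rw [if_pos hst] at h ⊢
      rcases ihC _ h with h' | ⟨i, hi⟩
      · exact Or.inl h'
      · exact Or.inr ⟨Fin.castAdd _ i, hi⟩
    · rw [if_neg hst] at h ⊢
      rcases ihD _ h with h' | ⟨i, hi⟩
      · exact Or.inl h'
      · exact Or.inr ⟨Fin.natAdd _ i, hi⟩
  | repl C ih =>
    intro f h
    simp only [Ctx.fill, mu] at h ⊢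
    exact ih f h

/-! #### Divergence builders -/

lemma diverges_of_red_loop {P U : Proc} (h1 : Red P U) (h2 : Red U U) : Diverges P := by
  refine ⟨fun n => match n with | 0 => P | _ + 1 => U, rfl, fun n => ?_⟩
  cases n with
  | zero => exact h1
  | succ n => exact h2

lemma diverges_par_left {A B : Proc} (h : Diverges A) : Diverges (.par A B) := by
  obtain ⟨f, h0, hs⟩ := h
  exact ⟨fun n => .par (f n) B, by simp only []; rw [h0], fun n => Red.ctx_par (hs n)⟩

lemma diverges_res {a : Name} {A : Proc} (h : Diverges A) : Diverges (.res a A) := by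
  obtain ⟨f, h0, hs⟩ := h
  exact ⟨fun n => .res a (f n), by simp only []; rw [h0], fun n => Red.ctx_res (hs n)⟩

lemma diverges_congr {P A : Proc} (hc : Congr P A) (h : Diverges A) : Diverges P := by
  obtain ⟨f, h0, hs⟩ := h
  refine ⟨fun n => match n with | 0 => P | n + 1 => f (n + 1), rfl, fun n => ?_⟩
  cases n with
  | zero => exact Red.struct hc (h0 ▸ hs 0) (Congr.refl _)
  | succ n => exact hs (n + 1)

end NoEnc
namespace NoEnc

/-! #### A closed divergent process -/

def gOut : Proc := .out none [.name 0] .nil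
def gInp : Proc := .inp [(none, [.bind 1])] (.out none [.name 1] .nil)
def gDiv : Proc := .res 0 (.par gOut (.repl gInp))

lemma fnames_gDiv : gDiv.fnames = ∅ := by
  simp [gDiv, gOut, gInp, Proc.fnames, optNames, joinFrees, joinBinds, Term.names,
    Pat.frees, Pat.binds]

lemma gDiv_subst (σ : Sub) : gDiv.subst σ = gDiv :=
  proc_subst_id _ σ (by rw [fnames_gDiv]; simp)

lemma red_gDiv : Red gDiv gDiv := by
  have hm : joinMatch [(none, [Term.name 0])] [(none, [Pat.bind 1])] =
      some [(1, Term.name 0)] := rfl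
  have hstep0 :
      Red (.par (.par gOut .nil) gInp) (.par (.par .nil .nil) gOut) := by
    have h0 := Red.interact
      ([((none : Option Term), ([Term.name 0], Proc.nil))] :
        List (Option Term × List Term × Proc))
      [((none : Option Term), [Pat.bind 1])]
      (.out none [.name 1] .nil) [(1, Term.name 0)] (by simp) hm
    exact h0
  have c1 : Congr (.par gOut (.repl gInp)) (.par (.par (.par gOut .nil) gInp) (.repl gInp)) :=
    Congr.trans (Congr.ctx_par (Congr.refl gOut) (Congr.repl_unfold gInp))
      (Congr.trans (Congr.par_assoc gOut gInp (.repl gInp))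
        (Congr.ctx_par (Congr.ctx_par (Congr.symm (Congr.par_nil gOut)) (Congr.refl gInp))
          (Congr.refl _)))
  have c2 : Congr (.par (.par (.par .nil .nil) gOut) (.repl gInp)) (.par gOut (.repl gInp)) :=
    Congr.ctx_par
      (Congr.trans (Congr.par_comm _ gOut)
        (Congr.trans (Congr.ctx_par (Congr.refl gOut) (Congr.par_nil .nil))
          (Congr.par_nil gOut)))
      (Congr.refl _)
  exact Red.ctx_res (Red.struct c1 (Red.ctx_par hstep0) c2)

/-! #### Shape of monadic joins and matching -/

lemma polyMatch_single {ds : List Term} {x : Name} {l1 : List (Name × Term)}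
    (h : polyMatch ds [Pat.bind x] = some l1) : ∃ t, ds = [t] ∧ l1 = [(x, t)] := by
  cases ds with
  | nil => cases h
  | cons t ds' =>
    cases ds' with
    | nil =>
      refine ⟨t, rfl, ?_⟩
      simpa [polyMatch, matchPat] using h.symm
    | cons u ds'' =>
      simp [polyMatch, matchPat, Option.bind_eq_some_iff] at h

lemma joinMatch_shape : ∀ (J : List (Option Term × List Pat))
    (os : List (Option Term × List Term)) (l : List (Name × Term)), Jcond J →
    joinMatch os J = some l →
    ∃ ts : List Term, os.map Prod.fst = J.map Prod.fst ∧
      os.map Prod.snd = ts.map (fun t => [t]) ∧ ts.length = J.length := by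
  intro J
  induction J with
  | nil =>
    intro os l _ h
    cases os with
    | nil => exact ⟨[], rfl, rfl, rfl⟩
    | cons o os => cases h
  | cons j J ih =>
    intro os l hJc h
    cases os with
    | nil => cases h
    | cons o os =>
      rcases o with ⟨c, ds⟩
      rcases j with ⟨c', ps⟩
      simp only [joinMatch] at h
      split at h
      case isTrue hcc =>
        simp only [Option.bind_eq_bind, Option.bind_eq_some_iff] at h
        obtain ⟨l1, h1, l2, h2, _⟩ := h
        obtain ⟨x, hx⟩ := hJc (c', ps) (by simp)
        subst hx
        obtain ⟨t, rfl, _⟩ := polyMatch_single h1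
        obtain ⟨ts, hfst, hsnd, hlen⟩ := ih os l2 (fun j' hj' => hJc j' (by simp [hj'])) h2
        exact ⟨t :: ts, by simp [hcc, hfst], by simp [hsnd], by simp [hlen]⟩
      case isFalse => cases h

lemma joinBinds_cons (j : Option Term × List Pat) (J : List (Option Term × List Pat)) :
    joinBinds (j :: J) = (j.2.foldr (fun p b => p.binds ++ b) []) ++ joinBinds J := rfl

lemma joinMatch_build : ∀ (J₂ : List (Option Term × List Pat))
    (os : List (Option Term × List Term)) (ts : List Term), Jcond J₂ →
    os.map Prod.fst = J₂.map Prod.fst → os.map Prod.snd = ts.map (fun t => [t]) →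
    joinMatch os J₂ = some ((joinBinds J₂).zip ts) := by
  intro J₂
  induction J₂ with
  | nil =>
    intro os ts _ hfst hsnd
    have hos : os = [] := by simpa using hfst
    subst hos
    have hts : ts = [] := by simpa using hsnd.symm
    subst hts
    rfl
  | cons j J ih =>
    intro os ts hJc hfst hsnd
    rcases j with ⟨c', ps⟩
    obtain ⟨x, hx⟩ := hJc (c', ps) (by simp)
    subst hx
    cases os with
    | nil => simp at hfst
    | cons o os =>
      rcases o with ⟨c, ds⟩
      simp only [List.map_cons, List.cons.injEq] at hfst
      cases ts with
      | nil => simp at hsnd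
      | cons t ts' =>
        simp only [List.map_cons, List.cons.injEq] at hsnd
        obtain ⟨hds, hsnd'⟩ := hsnd
        subst hds
        simp only [joinMatch, if_pos hfst.1]
        have hpm : polyMatch [t] [Pat.bind x] = some [(x, t)] := by
          simp [polyMatch, matchPat]
        rw [hpm, ih os ts' (fun j' hj' => hJc j' (by simp [hj'])) hfst.2 hsnd']
        simp only [Option.bind_eq_bind, Option.bind_some]
        rw [joinBinds_cons]
        simp [Pat.binds, List.zip]

lemma mem_joinBinds_of_pat {J : List (Option Term × List Pat)} {j} {x : Name}
    (hj : j ∈ J) (hx : j.2 = [Pat.bind x]) : x ∈ joinBinds J := by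
  induction J with
  | nil => cases hj
  | cons j' J ih =>
    rw [joinBinds_cons, List.mem_append]
    rcases List.mem_cons.mp hj with rfl | hj
    · exact Or.inl (by simp [hx, Pat.binds])
    · exact Or.inr (ih hj)

lemma joinBinds_props {avoid : Finset Name} {J₂ : List (Option Term × List Pat)}
    (h : ∀ j ∈ J₂, ∃ x, j.2 = [Pat.bind x] ∧ x ∉ avoid) :
    (joinBinds J₂).length = J₂.length ∧ ∀ y ∈ joinBinds J₂, y ∉ avoid := by
  induction J₂ with
  | nil => exact ⟨rfl, by simp [joinBinds]⟩
  | cons j J ih =>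
    obtain ⟨x, hx, hxa⟩ := h j (by simp)
    obtain ⟨ih1, ih2⟩ := ih (fun j' hj' => h j' (by simp [hj']))
    rw [joinBinds_cons, hx]
    constructor
    · simp [Pat.binds, ih1]
    · intro y hy
      simp only [Pat.binds, List.foldr_cons, List.foldr_nil, List.append_nil,
        List.singleton_append, List.mem_cons] at hy
      rcases hy with rfl | hy
      · exact hxa
      · exact ih2 y hy

lemma joinBinds_rename (x b : Name) (J : List (Option Term × List Pat)) :
    joinBinds (renameBindJoin x b J) =
      (joinBinds J).map (fun y => if y = x then b else y) := by
  induction J with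
  | nil => rfl
  | cons j J ih =>
    simp only [renameBindJoin, List.map_cons] at ih ⊢
    rw [joinBinds_cons, joinBinds_cons]
    dsimp only
    rw [List.map_append, ← ih]
    congr 1
    induction j.2 with
    | nil => rfl
    | cons p ps ihp =>
      simp only [List.map_cons, List.foldr_cons, List.map_append, binds_renameBindPat,
        ihp]

lemma rename_fst (x b : Name) (J : List (Option Term × List Pat)) :
    (renameBindJoin x b J).map Prod.fst = J.map Prod.fst := by
  simp [renameBindJoin]

/-! #### Freshening the binders of a monadic join -/

lemma freshen (avoid : Finset Name) : ∀ (n : ℕ) (J : List (Option Term × List Pat))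
    (Q : Proc), ((joinBinds J).toFinset ∩ avoid).card = n → Jcond J →
    ∃ J₂ Q₂, Congr (.inp J Q) (.inp J₂ Q₂) ∧
      (∀ j ∈ J₂, ∃ x, j.2 = [Pat.bind x] ∧ x ∉ avoid) ∧
      J₂.map Prod.fst = J.map Prod.fst := by
  intro n
  induction n using Nat.strong_induction_on with
  | _ n ihn =>
    intro J Q hcard hJc
    by_cases h0 : ((joinBinds J).toFinset ∩ avoid) = ∅
    · refine ⟨J, Q, Congr.refl _, ?_, rfl⟩
      intro j hj
      obtain ⟨x, hx⟩ := hJc j hj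
      refine ⟨x, hx, fun hxa => ?_⟩
      have hxb : x ∈ joinBinds J := mem_joinBinds_of_pat hj hx
      have hmem : x ∈ (joinBinds J).toFinset ∩ avoid := by
        simp [List.mem_toFinset, hxb, hxa]
      rw [h0] at hmem
      exact absurd hmem (Finset.notMem_empty x)
    · obtain ⟨x, hx⟩ := Finset.nonempty_iff_ne_empty.mpr h0
      rw [Finset.mem_inter, List.mem_toFinset] at hx
      obtain ⟨hxb, hxa⟩ := hx
      obtain ⟨b, hb⟩ := Infinite.exists_notMem_finset ((Proc.inp J Q).anames ∪ avoid)
      rw [Finset.mem_union] at hb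
      push_neg at hb
      obtain ⟨hb1, hb2⟩ := hb
      have hcong : Congr (.inp J Q) (.inp (renameBindJoin x b J) (Q.subst (ren1 x b))) :=
        Congr.alpha_inp hxb hb1
      have hbx : b ≠ x := fun h => hb2 (h ▸ hxa)
      -- the new intersection is strictly smaller
      have hsub : ((joinBinds (renameBindJoin x b J)).toFinset ∩ avoid) ⊆
          (((joinBinds J).toFinset ∩ avoid).erase x) := by
        intro y hy
        rw [Finset.mem_inter, List.mem_toFinset, joinBinds_rename] at hy
        obtain ⟨hy1, hy2⟩ := hy
        obtain ⟨z, hz, hzy⟩ := List.mem_map.mp hy1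
        by_cases hzx : z = x
        · rw [if_pos hzx] at hzy
          exact absurd (hzy ▸ hy2) hb2
        · rw [if_neg hzx] at hzy
          subst hzy
          rw [Finset.mem_erase, Finset.mem_inter, List.mem_toFinset]
          exact ⟨hzx, hz, hy2⟩
      have hlt : (((joinBinds (renameBindJoin x b J)).toFinset ∩ avoid)).card < n := by
        calc (((joinBinds (renameBindJoin x b J)).toFinset ∩ avoid)).card
            ≤ (((joinBinds J).toFinset ∩ avoid).erase x).card := Finset.card_le_card hsub
          _ < ((joinBinds J).toFinset ∩ avoid).card := by
              refine Finset.card_erase_lt_of_mem ?_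
              rw [Finset.mem_inter, List.mem_toFinset]
              exact ⟨hxb, hxa⟩
          _ = n := hcard
      obtain ⟨J₂, Q₂, hcong₂, hprops, hfst₂⟩ := ihn _ hlt (renameBindJoin x b J)
        (Q.subst (ren1 x b)) rfl (Jcond_rename.mpr hJc)
      exact ⟨J₂, Q₂, Congr.trans hcong hcong₂, hprops,
        hfst₂.trans (rename_fst x b J)⟩

/-! #### Lookup helper -/

lemma lookup_eq_none {a : Name} {l : List (Name × Term)} (h : a ∉ l.map Prod.fst) :
    List.lookup a l = none := by
  induction l with
  | nil => rfl
  | cons p l ih =>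
    rcases p with ⟨k, v⟩
    simp only [List.map_cons, List.mem_cons, not_or] at h
    simp only [List.lookup]
    rw [show (a == k) = false from beq_eq_false_iff_ne.mpr h.1]
    exact ih h.2

/-- **Key lemma**: in the presence of `ite`-congruences, any process all of whose
active inputs are monadic-binding joins diverges as soon as it has any reduction. -/
lemma red_gi_diverges : ∀ {P U : Proc}, Red P U → (mu P).gi → Diverges P := by
  intro P U h
  induction h with
  | interact outs J Q l hne hm =>
    intro hgi
    simp only [mu] at hgi
    obtain ⟨_, hJc, _⟩ := hgi
    obtain ⟨ts, hfst, hsnd, hlen⟩ := joinMatch_shape J _ l hJc hm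
    have hosne : (outs.map fun o => (o.1, o.2.1)) ≠ [] := by
      intro h0
      exact hne (List.map_eq_nil_iff.mp h0)
    have htsne : ts ≠ [] := by
      intro h0
      subst h0
      rw [List.length_nil] at hlen
      have : (outs.map fun o => (o.1, o.2.1)).length = 0 := by
        rw [show ((outs.map fun o => (o.1, o.2.1)).length =
          (J.map Prod.fst).length) from by rw [← hfst]; simp, List.length_map, ← hlen]
      exact hosne (List.eq_nil_of_length_eq_zero this)
    obtain ⟨t₁, ts', rfl⟩ := List.exists_cons_of_ne_nil htsne
    set A : Finset Name := (t₁ :: ts').foldr (fun t a => t.names ∪ a) ∅ with hA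
    obtain ⟨J₂, Q₂, hcong, hprops, hfst₂⟩ := freshen A _ J Q rfl hJc
    have hJc₂ : Jcond J₂ := fun j hj => (hprops j hj).imp (fun x hx => hx.1)
    have hm₂ : joinMatch (outs.map fun o => (o.1, o.2.1)) J₂ =
        some ((joinBinds J₂).zip (t₁ :: ts')) :=
      joinMatch_build J₂ _ _ hJc₂ (hfst.trans hfst₂.symm) hsnd
    obtain ⟨hblen, hbavoid⟩ := joinBinds_props hprops
    have hblen' : (joinBinds J₂).length = (t₁ :: ts').length := by
      rw [hblen, show J₂.length = J.length from by
        rw [← List.length_map (as := J₂) Prod.fst, hfst₂, List.length_map], ← hlen]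
    obtain ⟨k, krest, hk⟩ : ∃ k krest, joinBinds J₂ = k :: krest := by
      cases hbl : joinBinds J₂ with
      | nil => rw [hbl] at hblen'; simp at hblen'
      | cons k krest => exact ⟨k, krest, rfl⟩
    have hkA : k ∉ A := hbavoid k (by rw [hk]; simp)
    have ht₁A : t₁.names ⊆ A := names_sub_foldr (by simp)
    have hkt : Term.name k ≠ t₁ := by
      intro he
      apply hkA
      apply ht₁A
      rw [← he]
      simp [Term.names]
    set l₂ : List (Name × Term) := (joinBinds J₂).zip (t₁ :: ts') with hl₂
    have hl₂' : l₂ = (k, t₁) :: krest.zip ts' := by rw [hl₂, hk]; rfl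
    set Q₃ : Proc := .ite (.name k) t₁ gDiv Q₂ with hQ₃
    have hc3 : Congr (.inp J₂ Q₂) (.inp J₂ Q₃) :=
      Congr.ctx_inp (Congr.symm (Congr.ite_ne hkt gDiv Q₂))
    have hstep : Red (.par (parList (outs.map fun o => Proc.out o.1 o.2.1 o.2.2))
        (.inp J₂ Q₃))
        (.par (parList (outs.map fun o => o.2.2)) (Q₃.subst (toSub l₂))) :=
      Red.interact outs J₂ Q₃ l₂ hne hm₂
    have e1 : Term.subst (toSub l₂) (.name k) = t₁ := by
      show toSub l₂ k = t₁
      rw [toSub, hl₂']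
      simp [List.lookup]
    have hkeys : l₂.map Prod.fst = joinBinds J₂ :=
      List.map_fst_zip (le_of_eq hblen')
    have e2 : t₁.subst (toSub l₂) = t₁ := by
      refine term_subst_id t₁ (fun x hx => ?_)
      have hxA : x ∈ A := ht₁A hx
      have hxk : x ∉ l₂.map Prod.fst := by
        rw [hkeys]
        intro hc
        exact hbavoid x hc hxA
      rw [toSub, lookup_eq_none hxk]
      rfl
    have hsub : Q₃.subst (toSub l₂) = .ite t₁ t₁ gDiv (Q₂.subst (toSub l₂)) := by
      rw [hQ₃]
      rw [show Proc.subst (toSub l₂) (.ite (.name k) t₁ gDiv Q₂) =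
        .ite ((Term.name k).subst (toSub l₂)) (t₁.subst (toSub l₂))
          (gDiv.subst (toSub l₂)) (Q₂.subst (toSub l₂)) from rfl]
      rw [e1, e2, gDiv_subst]
    have post : Congr (.par (parList (outs.map fun o => o.2.2)) (Q₃.subst (toSub l₂)))
        (.par (parList (outs.map fun o => o.2.2)) gDiv) := by
      rw [hsub]
      exact Congr.ctx_par (Congr.refl _) (Congr.ite_eq t₁ gDiv _)
    have whole : Red (.par (parList (outs.map fun o => Proc.out o.1 o.2.1 o.2.2))
        (.inp J Q)) (.par (parList (outs.map fun o => o.2.2)) gDiv) :=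
      Red.struct (Congr.ctx_par (Congr.refl _) (Congr.trans hcong hc3)) hstep post
    have loop : Red (.par (parList (outs.map fun o => o.2.2)) gDiv)
        (.par (parList (outs.map fun o => o.2.2)) gDiv) :=
      Red.struct (Congr.par_comm _ _) (Red.ctx_par red_gDiv) (Congr.par_comm _ _)
    exact diverges_of_red_loop whole loop
  | ctx_par h ih =>
    intro hgi
    simp only [mu] at hgi
    exact diverges_par_left (ih hgi.1)
  | ctx_res h ih =>
    intro hgi
    exact diverges_res (ih hgi)
  | struct hc hred hc' ih =>
    intro hgi
    exact diverges_congr hc (ih (by rw [← mu_congr hc]; exact hgi))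

end NoEnc
namespace NoEnc

/-- Well-formed processes of the target language have only
monadic-binding joins at every position. -/
lemma wf_gi (P : Proc) : P.WF ⟨.A, .M, .D, .NO, .J⟩ → (mu P).gi := by
  induction P with
  | nil => intro _; exact trivial
  | succ => intro _; exact trivial
  | out ch ts P ih =>
    intro h
    simp only [mu]
    exact ih h.2.2.2.2
  | inp J Q ih =>
    intro h
    simp only [mu]
    refine ⟨?_, ih h.2.2.2⟩
    intro j hj
    obtain ⟨_, har, hpat⟩ := h.2.1 j hj
    have hlen : j.2.length = 1 := har
    obtain ⟨p, hp⟩ := List.length_eq_one_iff.mp hlen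
    cases p with
    | bind y => exact ⟨y, hp⟩
    | nmatch a =>
      have hmem : Pat.nmatch a ∈ j.2 := by rw [hp]; simp
      exact absurd (hpat _ hmem) (by simp [WFpat])
    | comp p q =>
      have hmem : Pat.comp p q ∈ j.2 := by rw [hp]; simp
      exact absurd (hpat _ hmem) (by simp [WFpat])
  | res a P ih => intro h; exact ih h
  | par P Q ihP ihQ =>
    intro h
    exact ⟨ihP h.1, ihQ h.2⟩
  | ite s t P Q ihP ihQ =>
    intro h
    simp only [mu]
    split
    · exact ihP h.2.2.1
    · exact ihQ h.2.2.2
  | repl P ih => intro h; simp only [mu]; exact ih h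

/-! #### The concrete source processes -/

def O0 : Proc := .out none [] .nil
def Isucc : Proc := .inp [(none, ([] : List Pat))] .succ
def Inil : Proc := .inp [(none, ([] : List Pat))] .nil
def Sp : Proc := .par O0 Isucc
def Sp' : Proc := .par O0 Inil

lemma wf_O0 : O0.WF ⟨.A, .P, .D, .NO, .B⟩ :=
  ⟨rfl, trivial, by simp, fun _ => rfl, trivial⟩

lemma wf_Isucc : Isucc.WF ⟨.A, .P, .D, .NO, .B⟩ :=
  ⟨rfl, by rintro j hj; simp at hj; subst hj; exact ⟨rfl, trivial, by simp⟩,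
    by simp [joinBinds], trivial⟩

lemma wf_Inil : Inil.WF ⟨.A, .P, .D, .NO, .B⟩ :=
  ⟨rfl, by rintro j hj; simp at hj; subst hj; exact ⟨rfl, trivial, by simp⟩,
    by simp [joinBinds], trivial⟩

lemma wf_Sp : Sp.WF ⟨.A, .P, .D, .NO, .B⟩ := ⟨wf_O0, wf_Isucc⟩
lemma wf_Sp' : Sp'.WF ⟨.A, .P, .D, .NO, .B⟩ := ⟨wf_O0, wf_Inil⟩

lemma fnames_O0 : O0.fnames = ∅ := by simp [O0, Proc.fnames, optNames]
lemma fnames_Isucc : Isucc.fnames = ∅ := by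
  simp [Isucc, Proc.fnames, joinFrees, joinBinds, optNames]
lemma fnames_Inil : Inil.fnames = ∅ := by
  simp [Inil, Proc.fnames, joinFrees, joinBinds, optNames]

lemma maySucceed_Sp : MaySucceed Sp := by
  have hm : joinMatch [((none : Option Term), ([] : List Term))]
      [((none : Option Term), ([] : List Pat))] = some [] := rfl
  have step := Red.interact
    ([((none : Option Term), (([] : List Term), Proc.nil))] :
      List (Option Term × List Term × Proc))
    [((none : Option Term), ([] : List Pat))] .succ [] (by simp) hm
  have c1 : Congr Sp (.par (.par O0 .nil) Isucc) :=
    Congr.ctx_par (Congr.symm (Congr.par_nil O0)) (Congr.refl _)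
  have red1 : Red Sp (.par (.par .nil .nil) .succ) := Red.struct c1 step (Congr.refl _)
  exact ⟨_, .par .nil .nil, Relation.ReflTransGen.single red1, Congr.refl _⟩

lemma mu_Sp_ni : (mu Sp).ni = 1 := by
  simp [Sp, O0, Isucc, mu]

lemma mu_Sp_zb : (mu Sp).zb := by
  simp [Sp, O0, Isucc, mu, bindless]

lemma not_div_Sp : ¬ Diverges Sp := by
  rintro ⟨f, h0, hs⟩
  have hr0 : Red Sp (f 1) := by
    have := hs 0
    rwa [h0] at this
  have h1 : (mu (f 1)).ni = 0 := red_ni_dec hr0 mu_Sp_zb mu_Sp_ni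
  exact (red_act (hs 1)).1 h1

lemma qt_Sp' : (mu Sp').qt := by
  simp [Sp', O0, Inil, mu, bindless]

lemma not_maySucceed_O0 : ¬ MaySucceed O0 := by
  rintro ⟨Q, R, hr, hc⟩
  have hirr : ∀ U, ¬ Red O0 U := fun U hU =>
    (red_act hU).1 (show (mu O0).ni = 0 by simp [O0, mu])
  have hQ : Q = O0 := reds_eq_of_irred hirr hr
  subst hQ
  exact (show ¬ (mu O0).as by simp [O0, mu]) (as_of_congr_succ hc)

lemma not_maySucceed_Isucc : ¬ MaySucceed Isucc := by
  rintro ⟨Q, R, hr, hc⟩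
  have hirr : ∀ U, ¬ Red Isucc U := fun U hU =>
    (red_act hU).2 (show (mu Isucc).no = 0 by simp [Isucc, mu])
  have hQ : Q = Isucc := reds_eq_of_irred hirr hr
  subst hQ
  exact (show ¬ (mu Isucc).as by simp [Isucc, mu]) (as_of_congr_succ hc)

end NoEnc
/-- Theorem 6.1: there exists no valid encoding from
`L_{A,P,D,NO,B}` into `L_{A,M,D,NO,J}`. -/
theorem no_encoding_APDNOB_to_AMDNOJ :
    ¬ Nonempty (ValidEncoding ⟨.A, .P, .D, .NO, .B⟩ ⟨.A, .M, .D, .NO, .J⟩) := by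
  rintro ⟨E⟩
  have hms : MaySucceed (E.enc NoEnc.Sp) :=
    (E.success_sensitive NoEnc.Sp NoEnc.wf_Sp).mp NoEnc.maySucceed_Sp
  by_cases hred : Reduces (E.enc NoEnc.Sp)
  · obtain ⟨U, hU⟩ := hred
    have hdiv := NoEnc.red_gi_diverges hU (NoEnc.wf_gi _ (E.enc_wf NoEnc.Sp NoEnc.wf_Sp))
    exact NoEnc.not_div_Sp (E.divergence_reflection NoEnc.Sp NoEnc.wf_Sp hdiv)
  · obtain ⟨T, R, hr, hc⟩ := hms
    have hT : T = E.enc NoEnc.Sp :=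
      NoEnc.reds_eq_of_irred (fun U hU => hred ⟨U, hU⟩) hr
    subst hT
    have hAS : (NoEnc.mu (E.enc NoEnc.Sp)).as := NoEnc.as_of_congr_succ hc
    obtain ⟨C, hC⟩ := E.comp_par (∅ : Finset Name)
    have h1 : E.enc NoEnc.Sp = C.fill ![E.enc NoEnc.O0, E.enc NoEnc.Isucc] :=
      hC NoEnc.O0 NoEnc.Isucc NoEnc.wf_O0 NoEnc.wf_Isucc
        (by rw [NoEnc.fnames_O0, NoEnc.fnames_Isucc]; simp)
    have h2 : E.enc NoEnc.Sp' = C.fill ![E.enc NoEnc.O0, E.enc NoEnc.Inil] :=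
      hC NoEnc.O0 NoEnc.Inil NoEnc.wf_O0 NoEnc.wf_Inil
        (by rw [NoEnc.fnames_O0, NoEnc.fnames_Inil]; simp)
    rw [h1] at hAS
    rcases NoEnc.ctx_as_cases C _ hAS with hnil | ⟨i, hi⟩
    · have hAS' : (NoEnc.mu (C.fill ![E.enc NoEnc.O0, E.enc NoEnc.Inil])).as :=
        NoEnc.ctx_as_mono C _ _ (fun _ h => absurd h (by simp [NoEnc.mu])) hnil
      rw [← h2] at hAS'
      exact NoEnc.qt_not_maySucceed NoEnc.qt_Sp'
        ((E.success_sensitive NoEnc.Sp' NoEnc.wf_Sp').mpr (NoEnc.maySucceed_of_as hAS'))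
    · have hms' : MaySucceed (![E.enc NoEnc.O0, E.enc NoEnc.Isucc] i) :=
        NoEnc.maySucceed_of_as hi
      fin_cases i
      · simp only [Matrix.cons_val_zero] at hms'
        exact NoEnc.not_maySucceed_O0
          ((E.success_sensitive NoEnc.O0 NoEnc.wf_O0).mpr hms')
      · simp only [Matrix.cons_val_one, Matrix.head_cons] at hms'
        exact NoEnc.not_maySucceed_Isucc
          ((E.success_sensitive NoEnc.Isucc NoEnc.wf_Isucc).mpr hms')

end Coordination
end
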